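/- arXiv:1702.07406 — 3 statements merged into one kernel-verified Lean document; each statement's English description precedes it below -/
import Mathlib

section
/- Let s be a real number with 1/2 < s < 1. Then there exists a constant c > 0 such that for all positive integers n, m with m ≥ n ≥ 3, the proportion P₀(n,m) of elements of S_n of order dividing m having no s-large cycles satisfies P₀(n,m) < c·d(m)·m^{2s}/n³. -/
open Finset
open scoped Classical
open Equiv Equiv.Perm

/-- `permP0 s n m` is the proportion of permutations `g` of `n` points of order dividing `m`
all of whose cycles are `s`-small, i.e. all cycle lengths are `< m ^ s`. -/
noncomputable def permP0 (s : ℝ) (n m : ℕ) : ℝ :=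
  ((Finset.univ.filter fun g : Equiv.Perm (Fin n) =>
      g ^ m = 1 ∧ ∀ d ∈ g.cycleType, (d : ℝ) < (m : ℝ) ^ s).card : ℝ) / (n.factorial : ℝ)

noncomputable def pcnt (m : ℕ) (t : ℝ) (n : ℕ) : ℕ :=
  (Finset.univ.filter fun g : Equiv.Perm (Fin n) =>
    ∀ d ∈ g.cycleType, d ∣ m ∧ (d : ℝ) < t).card

lemma pcnt_le_factorial (m : ℕ) (t : ℝ) (n : ℕ) : pcnt m t n ≤ n.factorial := by
  calc pcnt m t n ≤ (Finset.univ : Finset (Equiv.Perm (Fin n))).card :=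
        Finset.card_le_card (Finset.filter_subset _ _)
    _ = n.factorial := by simp [Finset.card_univ, Fintype.card_perm]

lemma fixcnt (m : ℕ) (t : ℝ) (n : ℕ) (S : Finset (Fin n)) :
    (Finset.univ.filter fun h : Equiv.Perm (Fin n) =>
      (∀ c ∈ h.cycleType, c ∣ m ∧ (c : ℝ) < t) ∧ ∀ x ∈ S, h x = x).card ≤
    pcnt m t (n - S.card) := by
  classical
  have hcard : Fintype.card {x : Fin n // x ∉ S} = n - S.card := by
    simp [Fintype.card_subtype_compl]
  let e : {x : Fin n // x ∉ S} ≃ Fin (n - S.card) := Fintype.equivFinOfCardEq hcard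
  set p : Fin n → Prop := fun x => x ∉ S with hp
  -- the map
  let Φ : Equiv.Perm (Fin n) → Equiv.Perm (Fin (n - S.card)) := fun h =>
    if H : ∀ x, p x ↔ p (h x) then e.permCongr (h.subtypePerm (fun x => (H x).symm)) else 1
  have hiff : ∀ h : Equiv.Perm (Fin n), (∀ x ∈ S, h x = x) → ∀ x, p x ↔ p (h x) := by
    intro h hfix x
    simp only [hp]
    constructor
    · intro hx hmem
      have h2 := h.injective (hfix _ hmem)
      exact hx (h2 ▸ hmem)
    · intro hx hmem
      exact hx ((hfix _ hmem).symm ▸ hmem)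
  have hext : ∀ (h : Equiv.Perm (Fin n)) (hfix : ∀ x ∈ S, h x = x),
      (Φ h).extendDomain e.symm = h := by
    intro h hfix
    have H := hiff h hfix
    ext x
    by_cases hx : p x
    · rw [Equiv.Perm.extendDomain_apply_subtype _ e.symm hx]
      simp [Φ, dif_pos H, Equiv.permCongr_apply]
    · rw [Equiv.Perm.extendDomain_apply_not_subtype _ e.symm hx]
      have hxS : x ∈ S := not_not.mp (by simpa [hp] using hx)
      simp [hfix x hxS]
  apply Finset.card_le_card_of_injOn Φ
  · intro h hmem
    simp only [Finset.mem_coe, Finset.mem_filter, Finset.mem_univ, true_and] at hmem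
    obtain ⟨hprop, hfix⟩ := hmem
    simp only [pcnt, Finset.mem_coe, Finset.mem_filter, Finset.mem_univ, true_and]
    have : (Φ h).cycleType = h.cycleType := by
      conv_rhs => rw [← hext h hfix]
      rw [Equiv.Perm.cycleType_extendDomain]
    rw [this]
    exact hprop
  · intro h1 hm1 h2 hm2 heq
    simp only [Finset.mem_coe, Finset.mem_filter, Finset.mem_univ, true_and] at hm1 hm2
    rw [← hext h1 hm1.2, ← hext h2 hm2.2, heq]

lemma pcnt_step (m : ℕ) (hm : m ≠ 0) (t : ℝ) (ht : 1 < t) (n : ℕ) (hn : 0 < n) :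
    pcnt m t n ≤ ∑ d ∈ m.divisors.filter (fun d : ℕ => (d : ℝ) < t),
      (n - 1).descFactorial (d - 1) * pcnt m t (n - d) := by
  classical
  set z : Fin n := ⟨0, hn⟩ with hzdef
  set Ds := m.divisors.filter (fun d : ℕ => (d : ℝ) < t) with hDs
  set F := (Finset.univ.filter fun g : Equiv.Perm (Fin n) =>
    ∀ d ∈ g.cycleType, d ∣ m ∧ (d : ℝ) < t) with hF
  set dg : Equiv.Perm (Fin n) → ℕ := fun g => orderOf (g.cycleOf z) with hdg
  have hmemCT : ∀ (g : Equiv.Perm (Fin n)), g z ≠ z →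
      (g.cycleOf z).support.card ∈ g.cycleType := by
    intro g hx
    rw [Equiv.Perm.cycleType_def]
    refine Multiset.mem_map.mpr ⟨g.cycleOf z, ?_, rfl⟩
    rw [← Finset.mem_def]
    exact Equiv.Perm.cycleOf_mem_cycleFactorsFinset_iff.mpr
      (Equiv.Perm.mem_support.mpr hx)
  have hmapsto : ∀ g ∈ F, dg g ∈ Ds := by
    intro g hg
    simp only [hF, Finset.mem_filter, Finset.mem_univ, true_and] at hg
    by_cases hzz : g z = z
    · have h1 : g.cycleOf z = 1 := (Equiv.Perm.cycleOf_eq_one_iff g).mpr hzz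
      simp [hDs, hdg, h1, Nat.one_mem_divisors.mpr hm, ht]
    · have hc := g.isCycle_cycleOf hzz
      have hd : dg g = (g.cycleOf z).support.card := hc.orderOf
      obtain ⟨h1, h2⟩ := hg _ (hmemCT g hzz)
      simp only [hDs, Finset.mem_filter, Nat.mem_divisors]
      exact ⟨⟨by rwa [hd], hm⟩, by rw [hd]; exact h2⟩
  rw [pcnt, ← hF, Finset.card_eq_sum_card_fiberwise hmapsto]
  apply Finset.sum_le_sum
  intro d hdDs
  simp only [hDs, Finset.mem_filter, Nat.mem_divisors] at hdDs
  obtain ⟨⟨hdvd, -⟩, hdt⟩ := hdDs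
  have hd1 : 0 < d := Nat.pos_of_dvd_of_pos hdvd (Nat.pos_of_ne_zero hm)
  -- the target finset
  set B := (Finset.univ.filter fun pr : (Fin (d-1) → Fin n) × Equiv.Perm (Fin n) =>
    Function.Injective pr.1 ∧ (∀ i, pr.1 i ≠ z) ∧
    (∀ c ∈ pr.2.cycleType, c ∣ m ∧ (c : ℝ) < t) ∧
    (∀ x ∈ insert z (Finset.image pr.1 Finset.univ), pr.2 x = x)) with hB
  -- the injection
  set Ψ : Equiv.Perm (Fin n) → (Fin (d-1) → Fin n) × Equiv.Perm (Fin n) :=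
    fun g => (fun i => (g ^ ((i : ℕ) + 1)) z, (g.cycleOf z)⁻¹ * g) with hΨ
  -- facts for members of the fiber
  have key : ∀ g, (∀ e ∈ g.cycleType, e ∣ m ∧ (e : ℝ) < t) → dg g = d →
      (∀ i : ℕ, ((g.cycleOf z) ^ i) z = (g ^ i) z) ∧
      ((g ^ d) z = z) ∧
      (∀ i j, i < d → j < d → (g ^ i) z = (g ^ j) z → i = j) ∧
      (∀ x, g.SameCycle z x → ((g.cycleOf z)⁻¹ * g) x = x) ∧
      (g.cycleType = (g.cycleOf z).cycleType + ((g.cycleOf z)⁻¹ * g).cycleType) ∧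
      (∀ i : ℕ, (g ^ i) z = (g ^ (i % d)) z) := by
    intro g hgprop hgd
    have hgd' : orderOf (g.cycleOf z) = d := hgd
    set c := g.cycleOf z with hc
    have hpow : ∀ i : ℕ, (c ^ i) z = (g ^ i) z := fun i => g.cycleOf_pow_apply_self z i
    have hcd : c ^ d = 1 := by rw [← hgd]; exact pow_orderOf_eq_one c
    have hgdz : (g ^ d) z = z := by rw [← hpow, hcd]; rfl
    have hinj : ∀ i j, i < d → j < d → (g ^ i) z = (g ^ j) z → i = j := by
      by_cases hzz : g z = z
      · have h1 : c = 1 := (Equiv.Perm.cycleOf_eq_one_iff g).mpr hzz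
        have : d = 1 := by rw [← hgd]; simp [hdg, ← hc, h1]
        omega
      · have hzsupp : z ∈ c.support :=
          (Equiv.Perm.mem_support_cycleOf_iff' hzz).mpr (Equiv.Perm.SameCycle.refl g z)
        have hcard : c.support.card = d := by
          rw [← hgd]; exact ((g.isCycle_cycleOf hzz).orderOf).symm
        intro i j hi hj hij
        have := (g.isCycleOn_support_cycleOf z).pow_apply_eq_pow_apply hzsupp
          (m := i) (n := j)
        rw [hcard] at this
        have hmod := this.mp hij
        have := hmod.eq_of_lt_of_lt hi hj
        exact this
    have hcy : ∀ x, g.SameCycle z x → c x = g x := by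
      intro x hx
      rw [hc, Equiv.Perm.cycleOf_apply, if_pos hx]
    have hrest : ∀ x, g.SameCycle z x → (c⁻¹ * g) x = x := by
      intro x hx
      have h2 : c x = g x := hcy x hx
      have : (c⁻¹) (g x) = x := by rw [← h2]; simp
      simpa [Equiv.Perm.mul_apply] using this
    have hdisj : c.Disjoint (c⁻¹ * g) := by
      intro x
      by_cases hx : g.SameCycle z x
      · exact Or.inr (hrest x hx)
      · exact Or.inl (Equiv.Perm.cycleOf_apply_of_not_sameCycle hx)
    have hsplit : g = c * (c⁻¹ * g) := by group
    have hct : g.cycleType = c.cycleType + (c⁻¹ * g).cycleType := by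
      conv_lhs => rw [hsplit]
      exact hdisj.cycleType_mul
    have hmod : ∀ i : ℕ, (g ^ i) z = (g ^ (i % d)) z := by
      intro i
      rw [← hpow i, ← hpow (i % d)]
      conv_lhs => rw [← pow_mod_orderOf c i]
      rw [hc, hgd']
    exact ⟨hpow, hgdz, hinj, hrest, hct, hmod⟩
  -- maps into B
  have hmapsB : ∀ g ∈ F.filter (fun g => dg g = d), Ψ g ∈ B := by
    intro g hg
    simp only [Finset.mem_filter] at hg
    obtain ⟨hgF, hgd⟩ := hg
    simp only [hF, Finset.mem_filter, Finset.mem_univ, true_and] at hgF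
    obtain ⟨hpow, hgdz, hinj, hrest, hct, -⟩ := key g hgF hgd
    have hlt : ∀ i : Fin (d-1), (i : ℕ) + 1 < d := fun i => by
      have := i.isLt; omega
    simp only [hB, hΨ, Finset.mem_filter, Finset.mem_univ, true_and]
    refine ⟨?_, ?_, ?_, ?_⟩
    · intro i j hij
      have := hinj _ _ (hlt i) (hlt j) hij
      exact Fin.ext (by omega)
    · intro i heq
      have h0 : (g ^ ((i : ℕ) + 1)) z = (g ^ 0) z := by simpa using heq
      have := hinj _ _ (hlt i) hd1 h0
      omega
    · intro e he
      exact hgF e (by rw [hct]; exact Multiset.mem_add.mpr (Or.inr he))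
    · intro x hx
      rcases Finset.mem_insert.mp hx with hx0 | hx
      · rw [hx0]; exact hrest z (Equiv.Perm.SameCycle.refl g z)
      · obtain ⟨i, -, rfl⟩ := Finset.mem_image.mp hx
        exact hrest _ ((Equiv.Perm.sameCycle_pow_left.mpr
          (Equiv.Perm.SameCycle.refl g z)).symm)
  -- injective on the fiber
  have hinjB : Set.InjOn Ψ (F.filter (fun g => dg g = d)) := by
    intro g1 hg1 g2 hg2 heq
    simp only [Finset.coe_filter, Set.mem_setOf_eq] at hg1 hg2
    obtain ⟨hg1F, hg1d⟩ := hg1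
    obtain ⟨hg2F, hg2d⟩ := hg2
    simp only [hF, Finset.mem_filter, Finset.mem_univ, true_and] at hg1F hg2F
    obtain ⟨hpow1, hgdz1, hinj1, hrest1, -, hmod1⟩ := key g1 hg1F hg1d
    obtain ⟨hpow2, hgdz2, hinj2, hrest2, -, hmod2⟩ := key g2 hg2F hg2d
    have htup : ∀ i : Fin (d-1), (g1 ^ ((i : ℕ) + 1)) z = (g2 ^ ((i : ℕ) + 1)) z := by
      intro i
      have := congrArg Prod.fst heq
      exact congrFun this i
    have hrest : (g1.cycleOf z)⁻¹ * g1 = (g2.cycleOf z)⁻¹ * g2 := congrArg Prod.snd heq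
    have hseq : ∀ i, i ≤ d → (g1 ^ i) z = (g2 ^ i) z := by
      intro i hi
      match i with
      | 0 => rfl
      | (j+1) =>
        by_cases hj : j + 1 = d
        · rw [hj, hgdz1, hgdz2]
        · have hj2 : j < d - 1 := by omega
          exact htup ⟨j, hj2⟩
    have hall : ∀ i, (g1 ^ i) z = (g2 ^ i) z := by
      intro i
      rw [hmod1 i, hmod2 i]
      exact hseq _ (le_of_lt (Nat.mod_lt _ hd1))
    have hsc : ∀ x, g1.SameCycle z x ↔ g2.SameCycle z x := by
      have haux : ∀ (a b : Equiv.Perm (Fin n)), (∀ i, (a ^ i) z = (b ^ i) z) →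
          ∀ x, a.SameCycle z x → b.SameCycle z x := by
        intro a b hab x hx
        obtain ⟨i, -, -, hix⟩ := hx.exists_pow_eq a
        rw [hab i] at hix
        exact hix ▸ (Equiv.Perm.sameCycle_pow_left.mpr
          (Equiv.Perm.SameCycle.refl b z)).symm
      exact fun x => ⟨haux g1 g2 hall x, haux g2 g1 (fun i => (hall i).symm) x⟩
    have happ : ∀ x, g1.SameCycle z x → g1 x = g2 x := by
      intro x hx
      obtain ⟨i, -, -, hix⟩ := hx.exists_pow_eq g1
      have h2 : (g2 ^ i) z = x := by rw [← hall i]; exact hix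
      calc g1 x = (g1 ^ (i+1)) z := by rw [pow_succ', Equiv.Perm.mul_apply, hix]
        _ = (g2 ^ (i+1)) z := hall (i+1)
        _ = g2 x := by rw [pow_succ', Equiv.Perm.mul_apply, h2]
    have hceq : g1.cycleOf z = g2.cycleOf z := by
      apply Equiv.ext
      intro x
      by_cases hx : g1.SameCycle z x
      · rw [Equiv.Perm.cycleOf_apply, if_pos hx,
          Equiv.Perm.cycleOf_apply, if_pos ((hsc x).mp hx)]
        exact happ x hx
      · rw [Equiv.Perm.cycleOf_apply_of_not_sameCycle hx,
          Equiv.Perm.cycleOf_apply_of_not_sameCycle (fun h => hx ((hsc x).mpr h))]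
    have : g1 = (g1.cycleOf z) * ((g1.cycleOf z)⁻¹ * g1) := by group
    rw [this, hrest, hceq]
    group
  refine le_trans (Finset.card_le_card_of_injOn Ψ hmapsB hinjB) ?_
  -- now bound B.card
  set A := (Finset.univ.filter fun f : Fin (d-1) → Fin n =>
    Function.Injective f ∧ ∀ i, f i ≠ z) with hA
  have hprojA : ∀ pr ∈ B, pr.1 ∈ A := by
    intro pr hpr
    simp only [hB, Finset.mem_filter, Finset.mem_univ, true_and] at hpr
    simp only [hA, Finset.mem_filter, Finset.mem_univ, true_and]
    exact ⟨hpr.1, hpr.2.1⟩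
  rw [Finset.card_eq_sum_card_fiberwise hprojA]
  have hfiber : ∀ f ∈ A, (B.filter fun pr => pr.1 = f).card ≤ pcnt m t (n - d) := by
    intro f hf
    simp only [hA, Finset.mem_filter, Finset.mem_univ, true_and] at hf
    obtain ⟨finj, fne⟩ := hf
    have hS : (insert z (Finset.image f Finset.univ)).card = d := by
      rw [Finset.card_insert_of_notMem, Finset.card_image_of_injective _ finj]
      · simp; omega
      · simp only [Finset.mem_image, not_exists]
        intro i
        simp only [Finset.mem_univ, true_and]
        exact fun h => fne i h
    have step1 : (B.filter fun pr => pr.1 = f).card ≤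
        (Finset.univ.filter fun h : Equiv.Perm (Fin n) =>
          (∀ c ∈ h.cycleType, c ∣ m ∧ (c : ℝ) < t) ∧
          ∀ x ∈ insert z (Finset.image f Finset.univ), h x = x).card := by
      apply Finset.card_le_card_of_injOn (fun pr => pr.2)
      · intro pr hpr
        simp only [Finset.mem_coe, Finset.mem_filter] at hpr
        obtain ⟨hprB, hprf⟩ := hpr
        simp only [hB, Finset.mem_filter, Finset.mem_univ, true_and] at hprB
        simp only [Finset.mem_coe, Finset.mem_filter, Finset.mem_univ, true_and]
        refine ⟨hprB.2.2.1, ?_⟩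
        rw [← hprf]
        exact hprB.2.2.2
      · intro pr1 hpr1 pr2 hpr2 heq
        simp only [Finset.coe_filter, Set.mem_setOf_eq] at hpr1 hpr2
        exact Prod.ext (hpr1.2.trans hpr2.2.symm) heq
    calc (B.filter fun pr => pr.1 = f).card ≤ _ := step1
      _ ≤ pcnt m t (n - (insert z (Finset.image f Finset.univ)).card) :=
          fixcnt m t n _
      _ = pcnt m t (n - d) := by rw [hS]
  calc ∑ f ∈ A, (B.filter fun pr => pr.1 = f).card
      ≤ ∑ f ∈ A, pcnt m t (n - d) := Finset.sum_le_sum hfiber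
    _ = A.card * pcnt m t (n - d) := by rw [Finset.sum_const, smul_eq_mul]
    _ ≤ (n - 1).descFactorial (d - 1) * pcnt m t (n - d) := by
        apply Nat.mul_le_mul_right
        -- A.card ≤ descFactorial
        have hsub : A ⊆ Finset.image
            (fun (emb : Fin (d-1) ↪ {x : Fin n // x ≠ z}) (i : Fin (d-1)) =>
              ((emb i : {x : Fin n // x ≠ z}) : Fin n)) Finset.univ := by
          intro f hf
          simp only [hA, Finset.mem_filter, Finset.mem_univ, true_and] at hf
          obtain ⟨finj, fne⟩ := hf
          refine Finset.mem_image.mpr ⟨⟨fun i => ⟨f i, fne i⟩, ?_⟩, Finset.mem_univ _, rfl⟩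
          intro a b h
          exact finj (congrArg Subtype.val h)
        calc A.card ≤ _ := Finset.card_le_card hsub
          _ ≤ (Finset.univ : Finset (Fin (d-1) ↪ {x : Fin n // x ≠ z})).card :=
              Finset.card_image_le
          _ = (n - 1).descFactorial (d - 1) := by
              rw [Finset.card_univ, Fintype.card_embedding_eq]
              congr 1
              · rw [Fintype.card_subtype_compl, Fintype.card_subtype_eq, Fintype.card_fin]
              · exact Fintype.card_fin _


noncomputable def pprop (m : ℕ) (t : ℝ) (n : ℕ) : ℝ :=
  (pcnt m t n : ℝ) / (n.factorial : ℝ)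

lemma pprop_nonneg (m : ℕ) (t : ℝ) (n : ℕ) : 0 ≤ pprop m t n := by
  unfold pprop; positivity

lemma pprop_le_one (m : ℕ) (t : ℝ) (n : ℕ) : pprop m t n ≤ 1 := by
  unfold pprop
  rw [div_le_one (by positivity)]
  exact_mod_cast pcnt_le_factorial m t n

lemma step_real (m : ℕ) (hm : m ≠ 0) (t : ℝ) (ht : 1 < t) (n : ℕ) (hn : 0 < n) :
    pprop m t n ≤ (1 / (n : ℝ)) * ∑ d ∈ m.divisors.filter (fun d : ℕ => (d : ℝ) < t),
      pprop m t (n - d) := by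
  have hstep := pcnt_step m hm t ht n hn
  have hfn : (0:ℝ) < (n.factorial : ℝ) := by positivity
  have hcast : (pcnt m t n : ℝ) ≤
      ∑ d ∈ m.divisors.filter (fun d : ℕ => (d : ℝ) < t),
        ((n - 1).descFactorial (d - 1) : ℝ) * (pcnt m t (n - d) : ℝ) := by
    exact_mod_cast hstep
  rw [pprop, div_le_iff₀ hfn, Finset.mul_sum, Finset.sum_mul]
  refine le_trans hcast (Finset.sum_le_sum ?_)
  intro d hd
  have hd1 : 0 < d := Nat.pos_of_mem_divisors (Finset.mem_filter.mp hd).1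
  by_cases hdn : d ≤ n
  · have hfac : ((n - d).factorial : ℝ) * ((n - 1).descFactorial (d - 1) : ℝ)
        = ((n - 1).factorial : ℝ) := by
      have := Nat.factorial_mul_descFactorial (show d - 1 ≤ n - 1 by omega)
      have h2 : (n - 1) - (d - 1) = n - d := by omega
      rw [h2] at this
      exact_mod_cast this
    have hnfac : (n.factorial : ℝ) = (n : ℝ) * ((n - 1).factorial : ℝ) := by
      exact_mod_cast (Nat.mul_factorial_pred hn.ne').symm
    have hfd : (0:ℝ) < ((n - d).factorial : ℝ) := by positivity
    have hnR : (0:ℝ) < (n : ℝ) := by exact_mod_cast hn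
    apply le_of_eq
    rw [pprop, hnfac]
    field_simp
    linear_combination (pcnt m t (n - d) : ℝ) * hfac
  · have hzero : (n - 1).descFactorial (d - 1) = 0 :=
      Nat.descFactorial_eq_zero_iff_lt.mpr (by omega)
    rw [hzero]
    push_cast
    rw [zero_mul]
    have h0 : (0:ℝ) ≤ 1 / (n:ℝ) := by positivity
    exact mul_nonneg (mul_nonneg h0 (pprop_nonneg m t (n - d))) (le_of_lt hfn)

lemma permP0_eq (s : ℝ) (n m : ℕ) : permP0 s n m = pprop m ((m : ℝ) ^ s) n := by
  have hset : (Finset.univ.filter fun g : Equiv.Perm (Fin n) =>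
      g ^ m = 1 ∧ ∀ d ∈ g.cycleType, (d : ℝ) < (m : ℝ) ^ s) =
      (Finset.univ.filter fun g : Equiv.Perm (Fin n) =>
      ∀ d ∈ g.cycleType, d ∣ m ∧ (d : ℝ) < (m : ℝ) ^ s) := by
    apply Finset.filter_congr
    intro g _
    constructor
    · rintro ⟨h1, h2⟩ d hd
      refine ⟨?_, h2 d hd⟩
      have horder : orderOf g ∣ m := orderOf_dvd_of_pow_eq_one h1
      have hlcm : d ∣ g.cycleType.lcm := Multiset.dvd_lcm hd
      rw [Equiv.Perm.lcm_cycleType] at hlcm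
      exact hlcm.trans horder
    · intro h
      refine ⟨?_, fun d hd => (h d hd).2⟩
      apply orderOf_dvd_iff_pow_eq_one.mp
      rw [← Equiv.Perm.lcm_cycleType]
      exact Multiset.lcm_dvd.mpr (fun d hd => (h d hd).1)
  rw [permP0, pprop, pcnt, hset]

theorem stmt5 (s : ℝ) (hs1 : 1 / 2 < s) (hs2 : s < 1) :
    ∃ c : ℝ, 0 < c ∧ ∀ n m : ℕ, 3 ≤ n → n ≤ m →
      permP0 s n m < c * (m.divisors.card : ℝ) * (m : ℝ) ^ (2 * s) / (n : ℝ) ^ 3 := by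
  refine ⟨32, by norm_num, ?_⟩
  intro n m hn3 hnm
  have hm3 : 3 ≤ m := le_trans hn3 hnm
  have hm0 : m ≠ 0 := by omega
  have hmR : (3:ℝ) ≤ (m:ℝ) := by exact_mod_cast hm3
  have hnR : (3:ℝ) ≤ (n:ℝ) := by exact_mod_cast hn3
  have hn0R : (0:ℝ) < (n:ℝ) := by linarith
  set t : ℝ := (m : ℝ) ^ s with htdef
  have ht1 : 1 < t := by
    rw [htdef]
    apply Real.one_lt_rpow_iff_of_pos (by linarith) |>.mpr
    exact Or.inl ⟨by linarith, by linarith⟩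
  have ht0 : 0 < t := by linarith
  set Ds := m.divisors.filter (fun d : ℕ => (d : ℝ) < t) with hDs
  set D : ℝ := (m.divisors.card : ℝ) with hD
  have hD1 : 1 ≤ D := by
    rw [hD]
    have : 1 ∈ m.divisors := Nat.one_mem_divisors.mpr hm0
    have : 0 < m.divisors.card := Finset.card_pos.mpr ⟨1, this⟩
    exact_mod_cast this
  have hDsD : ((Ds.card : ℝ)) ≤ D := by
    rw [hD, hDs]
    exact_mod_cast Finset.card_filter_le _ _
  have hDst : ((Ds.card : ℝ)) ≤ t := by
    have hsub : Ds ⊆ Finset.Icc 1 ⌊t⌋₊ := by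
      intro d hd
      simp only [hDs, Finset.mem_filter] at hd
      refine Finset.mem_Icc.mpr ⟨Nat.pos_of_mem_divisors hd.1, Nat.le_floor (le_of_lt hd.2)⟩
    calc ((Ds.card : ℝ)) ≤ ((Finset.Icc 1 ⌊t⌋₊).card : ℝ) := by
          exact_mod_cast Finset.card_le_card hsub
      _ = (⌊t⌋₊ : ℝ) := by rw [Nat.card_Icc]; simp
      _ ≤ t := Nat.floor_le (le_of_lt ht0)
  have hDs0 : (0:ℝ) ≤ (Ds.card : ℝ) := by positivity
  have hm2s : (m : ℝ) ^ (2 * s) = t * t := by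
    rw [htdef, show 2 * s = s + s by ring, Real.rpow_add (by linarith : (0:ℝ) < (m:ℝ))]
  have hinner : ∀ k : ℕ, 0 < k → pprop m t k ≤ (Ds.card : ℝ) / k := by
    intro k hk
    have hkR : (0:ℝ) < (k:ℝ) := by exact_mod_cast hk
    calc pprop m t k ≤ (1 / (k : ℝ)) * ∑ d ∈ Ds, pprop m t (k - d) :=
          step_real m hm0 t ht1 k hk
      _ ≤ (1 / (k : ℝ)) * ∑ d ∈ Ds, 1 := by
          apply mul_le_mul_of_nonneg_left _ (by positivity)
          exact Finset.sum_le_sum (fun d _ => pprop_le_one m t (k - d))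
      _ = (Ds.card : ℝ) / k := by
          rw [Finset.sum_const, nsmul_eq_mul, mul_one]
          ring
  have hD0 : (0:ℝ) < D := by linarith
  rw [permP0_eq s n m, ← htdef, hm2s]
  clear_value t D
  by_cases hcase : (n : ℝ) < 4 * t
  · -- small n
    have h1 : pprop m t n ≤ D / n := by
      refine le_trans (hinner n (by omega)) ?_
      gcongr
    refine lt_of_le_of_lt h1 ?_
    rw [div_lt_div_iff₀ hn0R (by positivity)]
    have hsq : (n:ℝ) * (n:ℝ) < 16 * (t * t) := by nlinarith [hcase, hn0R, ht0]
    nlinarith [hsq, mul_pos hD0 hn0R, mul_pos (mul_pos (mul_pos hD0 ht0) ht0) hn0R,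
      hn0R, hD0, ht0]
  · -- large n
    push_neg at hcase
    have htn : t ≤ (n:ℝ) / 4 := by linarith
    have hdmem : ∀ d ∈ Ds, (d:ℝ) < t ∧ d ≤ n := by
      intro d hd
      simp only [hDs, Finset.mem_filter] at hd
      have hdt := hd.2
      have hlt : (d:ℝ) < (n:ℝ) := by linarith
      exact ⟨hdt, le_of_lt (by exact_mod_cast hlt)⟩
    have hbound1 : ∀ k : ℕ, (n:ℝ)/2 ≤ (k:ℝ) → pprop m t k ≤ 2 * D / n := by
      intro k hk
      have hk0R : (0:ℝ) < (k:ℝ) := by linarith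
      have hk0 : 0 < k := by exact_mod_cast hk0R
      refine le_trans (hinner k hk0) ?_
      rw [div_le_div_iff₀ hk0R hn0R]
      nlinarith [hDsD, hDs0, hk, hk0R]
    have hbound2 : ∀ k : ℕ, 3*(n:ℝ)/4 ≤ (k:ℝ) →
        pprop m t k ≤ (4/(3*(n:ℝ))) * (t * (2 * D / n)) := by
      intro k hk
      have hk0R : (0:ℝ) < (k:ℝ) := by linarith
      have hk0 : 0 < k := by exact_mod_cast hk0R
      have hsum : ∑ d ∈ Ds, pprop m t (k - d) ≤ (Ds.card : ℝ) * (2 * D / n) := by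
        calc ∑ d ∈ Ds, pprop m t (k - d) ≤ ∑ _d ∈ Ds, (2 * D / n) := by
              apply Finset.sum_le_sum
              intro d hd
              obtain ⟨hdt, hdn⟩ := hdmem d hd
              apply hbound1
              have hdk : d ≤ k := by
                have : (d:ℝ) < (k:ℝ) := by linarith
                exact le_of_lt (by exact_mod_cast this)
              rw [Nat.cast_sub hdk]
              linarith
          _ = (Ds.card : ℝ) * (2 * D / n) := by rw [Finset.sum_const, nsmul_eq_mul]
      calc pprop m t k ≤ (1/(k:ℝ)) * ∑ d ∈ Ds, pprop m t (k - d) :=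
            step_real m hm0 t ht1 k hk0
        _ ≤ (1/(k:ℝ)) * ((Ds.card : ℝ) * (2 * D / n)) :=
            mul_le_mul_of_nonneg_left hsum (by positivity)
        _ ≤ (4/(3*(n:ℝ))) * (t * (2 * D / n)) := by
            have h2 : (1:ℝ)/(k:ℝ) ≤ 4/(3*(n:ℝ)) := by
              rw [div_le_div_iff₀ hk0R (by positivity)]
              linarith
            have h3 : (0:ℝ) ≤ 2 * D / n := by positivity
            exact mul_le_mul h2 (mul_le_mul_of_nonneg_right hDst h3)
              (mul_nonneg hDs0 h3) (by positivity)
    have hfinal : pprop m t n ≤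
        (1/(n:ℝ)) * ((Ds.card : ℝ) * ((4/(3*(n:ℝ))) * (t * (2 * D / n)))) := by
      have hsum : ∑ d ∈ Ds, pprop m t (n - d) ≤
          (Ds.card : ℝ) * ((4/(3*(n:ℝ))) * (t * (2 * D / n))) := by
        calc ∑ d ∈ Ds, pprop m t (n - d)
            ≤ ∑ _d ∈ Ds, ((4/(3*(n:ℝ))) * (t * (2 * D / n))) := by
              apply Finset.sum_le_sum
              intro d hd
              obtain ⟨hdt, hdn⟩ := hdmem d hd
              apply hbound2
              rw [Nat.cast_sub hdn]
              linarith
          _ = _ := by rw [Finset.sum_const, nsmul_eq_mul]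
      exact le_trans (step_real m hm0 t ht1 n (by omega))
        (mul_le_mul_of_nonneg_left hsum (by positivity))
    refine lt_of_le_of_lt hfinal ?_
    have hle : (1/(n:ℝ)) * ((Ds.card : ℝ) * ((4/(3*(n:ℝ))) * (t * (2 * D / n)))) ≤
        (8/3) * (D * (t*t) / (n:ℝ)^3) := by
      calc (1/(n:ℝ)) * ((Ds.card : ℝ) * ((4/(3*(n:ℝ))) * (t * (2 * D / n))))
          ≤ (1/(n:ℝ)) * (t * ((4/(3*(n:ℝ))) * (t * (2 * D / n)))) := by
            apply mul_le_mul_of_nonneg_left _ (by positivity)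
            apply mul_le_mul_of_nonneg_right hDst (by positivity)
        _ = (8/3) * (D * (t*t) / (n:ℝ)^3) := by field_simp; ring
    refine lt_of_le_of_lt hle ?_
    have hX : (0:ℝ) < D * (t*t) / (n:ℝ)^3 :=
      div_pos (mul_pos hD0 (mul_pos ht0 ht0)) (by positivity)
    have heq : 32 * D * (t*t) / (n:ℝ)^3 = 32 * (D * (t*t) / (n:ℝ)^3) := by ring
    rw [heq]
    linarith
end

section
/- Let s and δ be real numbers with 1/2 < s < 1 and 0 < δ < s, and let c_δ > 0 be a constant such that d(k) ≤ c_δ·k^δ for all positive integers k. Then for all positive integers n, m with m ≥ n ≥ 3: P₀(n,m) < (1 + 3c_δ + c_δ²)·d(m)·m^{2s}/(n(n−1)(n−2)). In particular, if n ≥ 6, then P₀(n,m) < 2(1 + 3c_δ + c_δ²)·d(m)·m^{2s}/n³, and if moreover m ≥ c_δ^{1/(s−δ)}, then P₀(n,m) < 10·d(m)·m^{2s}/n³. -/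
open Finset
open scoped Classical

namespace NPAux

open Equiv Equiv.Perm List

variable {n m : ℕ} {s : ℝ}

def Cond (s : ℝ) (m : ℕ) (g : Equiv.Perm (Fin n)) : Prop :=
  g ^ m = 1 ∧ ∀ d ∈ g.cycleType, (d : ℝ) < (m : ℝ) ^ s

noncomputable def SS (s : ℝ) (n m : ℕ) : Finset (Equiv.Perm (Fin n)) :=
  univ.filter (Cond s m)

noncomputable def DD (s : ℝ) (m : ℕ) : Finset ℕ :=
  m.divisors.filter fun a => (a : ℝ) < (m : ℝ) ^ s

lemma card_DD_le : (DD s m).card ≤ m.divisors.card :=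
  Finset.card_le_card (Finset.filter_subset _ _)

lemma one_mem_DD (hm : m ≠ 0) (h1M : (1 : ℝ) < (m : ℝ) ^ s) : 1 ∈ DD s m :=
  Finset.mem_filter.mpr ⟨Nat.one_mem_divisors.mpr hm, by simpa using h1M⟩

lemma orbitSize_mem_DD {g : Equiv.Perm (Fin n)} (hg : Cond s m g) (hm : m ≠ 0)
    {x : Fin n} (hx : x ∈ g.support) : (g.cycleOf x).support.card ∈ DD s m := by
  have hmem : (g.cycleOf x).support.card ∈ g.cycleType := by
    rw [cycleType_def]
    exact Multiset.mem_map_of_mem _ (cycleOf_mem_cycleFactorsFinset_iff.mpr hx)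
  have hdvd : (g.cycleOf x).support.card ∣ m :=
    (dvd_of_mem_cycleType hmem).trans (orderOf_dvd_of_pow_eq_one hg.1)
  exact Finset.mem_filter.mpr ⟨Nat.mem_divisors.mpr ⟨hdvd, hm⟩, hg.2 _ hmem⟩

lemma toList_length_ne_one {g : Equiv.Perm (Fin n)} {x : Fin n} :
    (g.toList x).length ≠ 1 := by
  rw [Equiv.Perm.length_toList]; exact card_support_ne_one _

lemma toList_len_mem_DD {g : Equiv.Perm (Fin n)} (hg : Cond s m g) (hm : m ≠ 0)
    {x : Fin n} (hx : g.toList x ≠ []) : (g.toList x).length ∈ DD s m := by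
  have hx' : x ∈ g.support := by
    by_contra hcon
    exact hx (toList_eq_nil_iff.mpr hcon)
  rw [Equiv.Perm.length_toList]
  exact orbitSize_mem_DD hg hm hx' 

lemma maxLen_mem_DD {g : Equiv.Perm (Fin n)} (hg : Cond s m g) (hm : m ≠ 0)
    (h1M : (1 : ℝ) < (m : ℝ) ^ s) (x : Fin n) : max (g.toList x).length 1 ∈ DD s m := by
  by_cases hx : g.toList x = []
  · simp [hx, one_mem_DD hm h1M]
  · have h2 : 2 ≤ (g.toList x).length := by
      have hne1 : (g.toList x).length ≠ 1 := toList_length_ne_one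
      have hne0 : (g.toList x).length ≠ 0 := fun h => hx (List.length_eq_zero_iff.mp h)
      omega
    rw [max_eq_left (by omega)]
    exact toList_len_mem_DD hg hm hx

lemma mem_toList_self {g : Equiv.Perm (Fin n)} {x : Fin n} (hx : x ∈ g.support) :
    x ∈ g.toList x := mem_toList_iff.mpr ⟨SameCycle.refl _ _, hx⟩

lemma toList_sym {g : Equiv.Perm (Fin n)} {x y : Fin n} (hy : y ∈ g.toList x) :
    x ∈ g.toList y := by
  obtain ⟨hs, hx⟩ := mem_toList_iff.mp hy
  exact mem_toList_iff.mpr ⟨hs.symm, (hs.mem_support_iff).mp hx⟩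

lemma common_mem {g : Equiv.Perm (Fin n)} {x y z : Fin n}
    (hzx : z ∈ g.toList x) (hzy : z ∈ g.toList y) : y ∈ g.toList x := by
  obtain ⟨hs, hx⟩ := mem_toList_iff.mp hzx
  obtain ⟨hs', hy⟩ := mem_toList_iff.mp hzy
  exact mem_toList_iff.mpr ⟨hs.trans hs'.symm, hx⟩

lemma toList_rotate {g : Equiv.Perm (Fin n)} {x y : Fin n} (hy : y ∈ g.toList x) :
    g.toList y = (g.toList x).rotate ((g.toList x).idxOf y) := by
  have hlt : (g.toList x).idxOf y < (g.toList x).length := List.idxOf_lt_length_iff.mpr hy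
  have h := List.idxOf_get hlt
  rw [List.get_eq_getElem, getElem_toList] at h
  have h2 := toList_pow_apply_eq_rotate g x ((g.toList x).idxOf y)
  rw [h] at h2
  exact h2

lemma toList_cons {g : Equiv.Perm (Fin n)} {x : Fin n} (hx : x ∈ g.support) :
    g.toList x = x :: (g.toList x).drop 1 := by
  have hpos : 0 < (g.toList x).length := length_toList_pos_of_mem_support _ _ hx
  have h0 : (g.toList x)[0] = x := by
    have := toList_getElem_zero g x hx
    simpa [List.get_eq_getElem] using this
  have h1 : g.toList x = (g.toList x)[0] :: (g.toList x).drop 1 := by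
    rw [← List.drop_eq_getElem_cons hpos, List.drop_zero]
  rw [h0] at h1
  exact h1

lemma indexOf_pos {g : Equiv.Perm (Fin n)} {x y : Fin n} (hx : x ∈ g.support)
    (hy : y ∈ g.toList x) (hne : y ≠ x) : 0 < (g.toList x).idxOf y := by
  rcases Nat.eq_zero_or_pos ((g.toList x).idxOf y) with h | h
  · exfalso
    have hlt : (g.toList x).idxOf y < (g.toList x).length := List.idxOf_lt_length_iff.mpr hy
    have h1 := List.idxOf_get hlt
    have hpos : 0 < (g.toList x).length := length_toList_pos_of_mem_support _ _ hx
    have h2 : (g.toList x).get ⟨0, hpos⟩ = x := toList_getElem_zero _ _ hx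
    apply hne
    rw [← h1]
    have : (⟨(g.toList x).idxOf y, hlt⟩ : Fin (g.toList x).length) = ⟨0, hpos⟩ := Fin.ext h
    rw [this, h2]
  · exact h

section Points

variable (x0 x1 x2 : Fin n)

noncomputable def Fc (g : Equiv.Perm (Fin n)) : List (Fin n) × List (Fin n) × List (Fin n) :=
  (g.toList x0, g.toList x1, g.toList x2)

def Oset (c : List (Fin n) × List (Fin n) × List (Fin n)) : Finset (Fin n) :=
  (({x0, x1, x2} : Finset (Fin n)) ∪ c.1.toFinset) ∪ (c.2.1.toFinset ∪ c.2.2.toFinset)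

variable {x0 x1 x2}

lemma mem_Oset_iff {c : List (Fin n) × List (Fin n) × List (Fin n)} {z : Fin n} :
    z ∈ Oset x0 x1 x2 c ↔
      (z = x0 ∨ z ∈ c.1) ∨ (z = x1 ∨ z ∈ c.2.1) ∨ (z = x2 ∨ z ∈ c.2.2) := by
  simp only [Oset, Finset.mem_union, Finset.mem_insert, Finset.mem_singleton, List.mem_toFinset]
  tauto

lemma orbit_closed {g : Equiv.Perm (Fin n)} {x z : Fin n}
    (h : g z = x ∨ g z ∈ g.toList x) : z = x ∨ z ∈ g.toList x := by
  rcases h with h | h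
  · by_cases hx : x ∈ g.support
    · right
      refine mem_toList_iff.mpr ⟨?_, hx⟩
      have h1 : g.SameCycle z x := ⟨1, by simpa using h⟩
      exact h1.symm
    · left
      have hfix : g x = x := notMem_support.mp hx
      have : g z = g x := by rw [h, hfix]
      exact g.injective this
  · right
    obtain ⟨hs, hx⟩ := mem_toList_iff.mp h
    refine mem_toList_iff.mpr ⟨?_, hx⟩
    have h1 : g.SameCycle z (g z) := ⟨1, by simp⟩
    exact hs.trans h1.symm

lemma apply_mem_Oset {g : Equiv.Perm (Fin n)} {z : Fin n}
    (h : g z ∈ Oset x0 x1 x2 (Fc x0 x1 x2 g)) : z ∈ Oset x0 x1 x2 (Fc x0 x1 x2 g) := by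
  rw [mem_Oset_iff] at h ⊢
  rcases h with h | h | h
  · exact Or.inl (orbit_closed h)
  · exact Or.inr (Or.inl (orbit_closed h))
  · exact Or.inr (Or.inr (orbit_closed h))

lemma eq_on_toList {g g' : Equiv.Perm (Fin n)} {x : Fin n}
    (h : g.toList x = g'.toList x) :
    ∀ z, (z = x ∨ z ∈ g.toList x) → g z = g' z := by
  have key : ∀ z ∈ g.toList x, g z = g' z := by
    intro z hz
    obtain ⟨hs, hx⟩ := mem_toList_iff.mp hz
    have hz' : z ∈ g'.toList x := h ▸ hz
    obtain ⟨hs', hx'⟩ := mem_toList_iff.mp hz'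
    have e1 : g z = (g.cycleOf x) z := (hs.cycleOf_apply).symm
    have e2 : g' z = (g'.cycleOf x) z := (hs'.cycleOf_apply).symm
    rw [e1, e2, ← formPerm_toList, ← formPerm_toList, h]
  intro z hz
  rcases hz with rfl | hz
  · by_cases hx : z ∈ g.support
    · exact key z (mem_toList_self hx)
    · have hx' : z ∉ g'.support := by
        rw [← toList_eq_nil_iff] at hx ⊢
        rw [← h]; exact hx
      rw [notMem_support.mp hx, notMem_support.mp hx']
  · exact key z hz

lemma eq_on_Oset {g g' : Equiv.Perm (Fin n)}
    (h : Fc x0 x1 x2 g = Fc x0 x1 x2 g') :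
    ∀ z ∈ Oset x0 x1 x2 (Fc x0 x1 x2 g), g z = g' z := by
  have h0 : g.toList x0 = g'.toList x0 := congrArg (·.1) h
  have h1 : g.toList x1 = g'.toList x1 := congrArg (·.2.1) h
  have h2 : g.toList x2 = g'.toList x2 := congrArg (·.2.2) h
  intro z hz
  rw [mem_Oset_iff] at hz
  rcases hz with hz | hz | hz
  · exact eq_on_toList h0 z hz
  · exact eq_on_toList h1 z hz
  · exact eq_on_toList h2 z hz

lemma fiber_card_le (c : List (Fin n) × List (Fin n) × List (Fin n)) :
    ((SS s n m).filter fun g => Fc x0 x1 x2 g = c).card ≤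
      (n - (Oset x0 x1 x2 c).card).factorial := by
  classical
  set T := (SS s n m).filter fun g => Fc x0 x1 x2 g = c with hT
  set O := Oset x0 x1 x2 c with hOdef
  set K : Finset (Fin n) := Oᶜ with hK
  have hKcard : K.card = n - O.card := by
    rw [hK, Finset.card_compl, Fintype.card_fin]
  have hfact : (n - O.card).factorial = Fintype.card (↥K ↪ ↥K) := by
    rw [Fintype.card_embedding_eq, Fintype.card_coe, hKcard, Nat.descFactorial_self]
  rw [hfact, ← Fintype.card_coe T]
  have hmemT : ∀ g : ↥T, Fc x0 x1 x2 (g : Equiv.Perm (Fin n)) = c :=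
    fun g => (Finset.mem_filter.mp g.2).2
  have hmapsto : ∀ (g : ↥T) (z : Fin n), z ∈ K → (g : Equiv.Perm (Fin n)) z ∈ K := by
    intro g z hz
    rw [hK, Finset.mem_compl] at hz ⊢
    intro hcon
    apply hz
    have := apply_mem_Oset (g := (g : Equiv.Perm (Fin n))) (z := z)
      (by rw [hmemT g, ← hOdef]; exact hcon)
    rwa [hmemT g, ← hOdef] at this
  refine Fintype.card_le_of_injective
    (fun g => ⟨fun z => ⟨(g : Equiv.Perm (Fin n)) z.1, hmapsto g z.1 z.2⟩, ?_⟩) ?_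
  · intro z z' hzz
    have : (g : Equiv.Perm (Fin n)) z.1 = (g : Equiv.Perm (Fin n)) z'.1 :=
      congrArg Subtype.val hzz
    exact Subtype.ext ((g : Equiv.Perm (Fin n)).injective this)
  · intro g g' hgg
    apply Subtype.ext
    apply Equiv.ext
    intro z
    by_cases hz : z ∈ O
    · have := eq_on_Oset (x0 := x0) (x1 := x1) (x2 := x2)
        (g := (g : Equiv.Perm (Fin n))) (g' := (g' : Equiv.Perm (Fin n)))
        (by rw [hmemT g, hmemT g'])
      have h2 := this z (by rw [hmemT g, ← hOdef]; exact hz)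
      exact h2
    · have hzK : z ∈ K := by rw [hK, Finset.mem_compl]; exact hz
      have := congrFun (congrArg (fun (e : ↥K ↪ ↥K) => (e : ↥K → ↥K)) hgg) ⟨z, hzK⟩
      exact congrArg Subtype.val this

lemma card_SS_le_sum :
    (SS s n m).card ≤
      ∑ c ∈ (SS s n m).image (Fc x0 x1 x2), (n - (Oset x0 x1 x2 c).card).factorial := by
  rw [Finset.card_eq_sum_card_image (Fc x0 x1 x2)]
  exact Finset.sum_le_sum fun c _ => fiber_card_le c

lemma image_spec {c : List (Fin n) × List (Fin n) × List (Fin n)}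
    (hc : c ∈ (SS s n m).image (Fc x0 x1 x2)) :
    ∃ g : Equiv.Perm (Fin n), Cond s m g ∧
      g.toList x0 = c.1 ∧ g.toList x1 = c.2.1 ∧ g.toList x2 = c.2.2 := by
  obtain ⟨g, hg, rfl⟩ := Finset.mem_image.mp hc
  exact ⟨g, (Finset.mem_filter.mp hg).2, rfl, rfl, rfl⟩

end Points

section Toolkit

lemma split_at {γ : Type*} (l : List γ) (i : ℕ) (hi : i < l.length) :
    l = l.take i ++ l[i] :: l.drop (i + 1) := by
  rw [← List.drop_eq_getElem_cons hi, List.take_append_drop]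

lemma split_at2 {γ : Type*} (l : List γ) (i j : ℕ) (hij : i < j) (hj : j < l.length) :
    l = l.take i ++ l[i] :: (((l.drop (i + 1)).take (j - i - 1)) ++ l[j] :: l.drop (j + 1)) := by
  have hi : i < l.length := hij.trans hj
  have h1 : (l.drop (i + 1)).drop (j - i - 1) = l.drop j := by
    rw [List.drop_drop]
    congr 1
    omega
  conv_lhs => rw [split_at l i hi]
  congr 1
  conv_lhs => rw [← List.take_append_drop (j - i - 1) (l.drop (i + 1)), h1,
    List.drop_eq_getElem_cons hj]

lemma length_take_of_le {γ : Type*} {l : List γ} {i : ℕ} (h : i ≤ l.length) :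
    (l.take i).length = i := by
  rw [List.length_take]
  omega

noncomputable def listEmb {L : ℕ} (R : Finset (Fin n)) (u : List (Fin n))
    (h1 : u.Nodup) (h2 : ∀ z ∈ u, z ∈ R) (h3 : u.length = L) : Fin L ↪ ↥R :=
  ⟨fun i => ⟨u.get (Fin.cast h3.symm i), h2 _ (List.get_mem u (Fin.cast h3.symm i))⟩, by
    intro i i' h
    have hval : u.get (Fin.cast h3.symm i) = u.get (Fin.cast h3.symm i') :=
      congrArg Subtype.val h
    have := (List.nodup_iff_injective_get.mp h1) hval
    exact Fin.ext (by simpa [Fin.ext_iff] using this)⟩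

lemma listEmb_inj {L : ℕ} {R : Finset (Fin n)} {u u' : List (Fin n)}
    {h1 h2 h3 h1' h2' h3'} (h : listEmb (L := L) R u h1 h2 h3 = listEmb R u' h1' h2' h3') :
    u = u' := by
  apply List.ext_get (by rw [h3, h3'])
  intro k hk hk'
  have := congrFun (congrArg (fun (e : Fin L ↪ ↥R) => (e : Fin L → ↥R)) h)
    ⟨k, by omega⟩
  have hval := congrArg Subtype.val this
  simpa [listEmb] using hval

lemma descF_mul_factorial_le (N k : ℕ) : N.descFactorial k * (N - k).factorial ≤ N.factorial := by
  rcases le_or_gt k N with hk | hk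
  · rw [Nat.mul_comm, Nat.factorial_mul_descFactorial hk]
  · simp [Nat.descFactorial_of_lt hk]

lemma Oset_card_ge {x0 x1 x2 : Fin n} (h01 : x0 ≠ x1) (h02 : x0 ≠ x2) (h12 : x1 ≠ x2)
    {c : List (Fin n) × List (Fin n) × List (Fin n)} (u : List (Fin n)) (hnd : u.Nodup)
    (hsub : ∀ z ∈ u, z ∈ Oset x0 x1 x2 c)
    (hns : ∀ z ∈ u, z ≠ x0 ∧ z ≠ x1 ∧ z ≠ x2) :
    3 + u.length ≤ (Oset x0 x1 x2 c).card := by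
  have hsub2 : ({x0, x1, x2} : Finset (Fin n)) ∪ u.toFinset ⊆ Oset x0 x1 x2 c := by
    intro z hz
    rcases Finset.mem_union.mp hz with hz | hz
    · rw [mem_Oset_iff]
      rcases Finset.mem_insert.mp hz with rfl | hz
      · exact Or.inl (Or.inl rfl)
      rcases Finset.mem_insert.mp hz with rfl | hz
      · exact Or.inr (Or.inl (Or.inl rfl))
      · rw [Finset.mem_singleton] at hz
        exact Or.inr (Or.inr (Or.inl hz))
    · exact hsub z (List.mem_toFinset.mp hz)
  have hcard : (({x0, x1, x2} : Finset (Fin n)) ∪ u.toFinset).card = 3 + u.length := by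
    rw [Finset.card_union_of_disjoint, List.toFinset_card_of_nodup hnd]
    · congr 1
      rw [Finset.card_insert_of_notMem (by simp [h01, h02]),
        Finset.card_insert_of_notMem (by simp [h12]), Finset.card_singleton]
    · rw [Finset.disjoint_left]
      intro z hz hz'
      have := hns z (List.mem_toFinset.mp hz')
      rcases Finset.mem_insert.mp hz with rfl | hz
      · exact this.1 rfl
      rcases Finset.mem_insert.mp hz with rfl | hz
      · exact this.2.1 rfl
      · rw [Finset.mem_singleton] at hz
        exact this.2.2 hz
  calc 3 + u.length = (({x0, x1, x2} : Finset (Fin n)) ∪ u.toFinset).card := hcard.symm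
    _ ≤ _ := Finset.card_le_card hsub2

end Toolkit


section Slices

variable (x0 x1 x2 : Fin n)

noncomputable def TT (s : ℝ) (n m : ℕ) (x0 x1 x2 : Fin n) :
    Finset (List (Fin n) × List (Fin n) × List (Fin n)) :=
  (SS s n m).image (Fc x0 x1 x2)

def NSset : Finset (Fin n) := ({x0, x1, x2} : Finset (Fin n))ᶜ

variable {x0 x1 x2}

lemma card_NSset (h01 : x0 ≠ x1) (h02 : x0 ≠ x2) (h12 : x1 ≠ x2) :
    (NSset x0 x1 x2).card = n - 3 := by
  rw [NSset, Finset.card_compl, Fintype.card_fin]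
  congr 1
  rw [Finset.card_insert_of_notMem (by simp [h01, h02]),
    Finset.card_insert_of_notMem (by simp [h12]), Finset.card_singleton]

lemma mem_NSset {z : Fin n} (h0 : z ≠ x0) (h1 : z ≠ x1) (h2 : z ≠ x2) :
    z ∈ NSset x0 x1 x2 := by
  rw [NSset, Finset.mem_compl]
  simp [h0, h1, h2]

lemma NSset_spec {z : Fin n} (h : z ∈ NSset x0 x1 x2) : z ≠ x0 ∧ z ≠ x1 ∧ z ≠ x2 := by
  rw [NSset, Finset.mem_compl] at h
  simp only [Finset.mem_insert, Finset.mem_singleton, not_or] at h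
  exact h

lemma drop1_ne_self {g : Equiv.Perm (Fin n)} {y z : Fin n}
    (hz : z ∈ (g.toList y).drop 1) : z ≠ y := by
  by_cases h : g.toList y = []
  · rw [h] at hz; simp at hz
  · have hy : y ∈ g.support := by
      by_contra hcon
      exact h (toList_eq_nil_iff.mpr hcon)
    have hnd := nodup_toList g y
    rw [toList_cons hy, List.nodup_cons] at hnd
    intro rfl'
    exact hnd.1 (rfl' ▸ hz)

lemma drop1_subset {g : Equiv.Perm (Fin n)} {y z : Fin n}
    (hz : z ∈ (g.toList y).drop 1) : z ∈ g.toList y :=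
  List.drop_subset _ _ hz

lemma comp_eq {g g' : Equiv.Perm (Fin n)} {y : Fin n}
    (hlen : max (g.toList y).length 1 = max (g'.toList y).length 1)
    (htail : (g.toList y).drop 1 = (g'.toList y).drop 1) :
    g.toList y = g'.toList y := by
  by_cases h : g.toList y = []
  · have hl : (g.toList y).length = 0 := by rw [h]; rfl
    have hl' : (g'.toList y).length = 0 := by
      have h1 : (g'.toList y).length ≠ 1 := toList_length_ne_one
      omega
    rw [h, List.length_eq_zero_iff.mp hl']
  · have hy : y ∈ g.support := by
      by_contra hcon; exact h (toList_eq_nil_iff.mpr hcon)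
    have hlgpos : 0 < (g.toList y).length := length_toList_pos_of_mem_support _ _ hy
    have hl1 : (g.toList y).length ≠ 1 := toList_length_ne_one
    have hl' : 0 < (g'.toList y).length := by
      have h1' : (g'.toList y).length ≠ 1 := toList_length_ne_one
      omega
    have hy' : y ∈ g'.support := by
      by_contra hcon
      rw [← toList_eq_nil_iff, ← List.length_eq_zero_iff] at hcon
      omega
    rw [toList_cons hy, toList_cons hy', htail]

lemma take_toList_eq {g : Equiv.Perm (Fin n)} {x : Fin n} (hx : x ∈ g.support)
    {i : ℕ} (hi : 0 < i) :
    (g.toList x).take i = x :: ((g.toList x).drop 1).take (i - 1) := by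
  obtain ⟨k, rfl⟩ : ∃ k, i = k + 1 := ⟨i - 1, by omega⟩
  conv_lhs => rw [toList_cons hx]
  rw [List.take_succ_cons, Nat.add_sub_cancel]

lemma toList_split1 {g : Equiv.Perm (Fin n)} {x y : Fin n} (hx : x ∈ g.support)
    (hy : y ∈ g.toList x) (hne : y ≠ x) :
    g.toList x = x :: (((g.toList x).drop 1).take ((g.toList x).idxOf y - 1)
      ++ y :: (g.toList x).drop ((g.toList x).idxOf y + 1)) := by
  have hi0 : 0 < (g.toList x).idxOf y := indexOf_pos hx hy hne
  have hilt : (g.toList x).idxOf y < (g.toList x).length := List.idxOf_lt_length_iff.mpr hy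
  have hval : (g.toList x)[(g.toList x).idxOf y] = y := List.getElem_idxOf hilt
  conv_lhs => rw [split_at (g.toList x) _ hilt]
  rw [hval, take_toList_eq hx hi0, List.cons_append]

lemma toList_split2 {g : Equiv.Perm (Fin n)} {x y z : Fin n} (hx : x ∈ g.support)
    (hy : y ∈ g.toList x) (hz : z ∈ g.toList x)
    (hij : (g.toList x).idxOf y < (g.toList x).idxOf z) (hney : y ≠ x) :
    g.toList x = x :: (((g.toList x).drop 1).take ((g.toList x).idxOf y - 1)
      ++ y :: (((g.toList x).drop ((g.toList x).idxOf y + 1)).take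
          ((g.toList x).idxOf z - (g.toList x).idxOf y - 1)
        ++ z :: (g.toList x).drop ((g.toList x).idxOf z + 1))) := by
  have hi0 : 0 < (g.toList x).idxOf y := indexOf_pos hx hy hney
  have hjlt : (g.toList x).idxOf z < (g.toList x).length := List.idxOf_lt_length_iff.mpr hz
  have hilt : (g.toList x).idxOf y < (g.toList x).length := lt_trans hij hjlt
  have hvy : (g.toList x)[(g.toList x).idxOf y] = y := List.getElem_idxOf hilt
  have hvz : (g.toList x)[(g.toList x).idxOf z] = z := List.getElem_idxOf hjlt
  conv_lhs => rw [split_at2 (g.toList x) _ _ hij hjlt]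
  rw [hvy, hvz, take_toList_eq hx hi0, List.cons_append]

lemma nodup_decomp3 {γ : Type*} {l S1 S2 S3 : List γ} {x y z : γ}
    (hl : l = x :: (S1 ++ y :: (S2 ++ z :: S3))) (hnd : l.Nodup) :
    (S1 ++ (S2 ++ S3)).Nodup ∧
      ∀ w ∈ S1 ++ (S2 ++ S3), w ∈ l ∧ w ≠ x ∧ w ≠ y ∧ w ≠ z := by
  subst hl
  simp only [List.nodup_cons, List.nodup_append', List.mem_append, List.mem_cons,
    List.disjoint_left, not_or] at hnd
  obtain ⟨⟨hx1, hxy, hx2, hxz, hx3⟩, nd1, ⟨⟨hy2, hyz, hy3⟩, nd2, ⟨hz3, nd3⟩, hS2⟩, hS1⟩ := hnd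
  constructor
  · rw [List.nodup_append', List.nodup_append']
    refine ⟨nd1, ⟨nd2, nd3, ?_⟩, ?_⟩
    · intro a ha ha'
      exact (hS2 ha).2 ha'
    · intro a ha ha'
      rcases List.mem_append.mp ha' with h | h
      · exact (hS1 ha).2.1 h
      · exact (hS1 ha).2.2.2 h
  · intro w hw
    rcases List.mem_append.mp hw with hw | hw'
    · exact ⟨by simp [hw], fun h => hx1 (h ▸ hw), (hS1 hw).1, (hS1 hw).2.2.1⟩
    · rcases List.mem_append.mp hw' with hw | hw
      · exact ⟨by simp [hw], fun h => hx2 (h ▸ hw), fun h => hy2 (h ▸ hw), (hS2 hw).1⟩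
      · exact ⟨by simp [hw], fun h => hx3 (h ▸ hw), fun h => hy3 (h ▸ hw),
          fun h => hz3 (h ▸ hw)⟩

lemma nodup_decomp2 {γ : Type*} {l S1 S2 : List γ} {x y : γ}
    (hl : l = x :: (S1 ++ y :: S2)) (hnd : l.Nodup) :
    (S1 ++ S2).Nodup ∧ ∀ w ∈ S1 ++ S2, w ∈ l ∧ w ≠ x ∧ w ≠ y := by
  subst hl
  simp only [List.nodup_cons, List.nodup_append', List.mem_append, List.mem_cons,
    List.disjoint_left, not_or] at hnd
  obtain ⟨⟨hx1, hxy, hx2⟩, nd1, ⟨hy2, nd2⟩, hS1⟩ := hnd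
  constructor
  · rw [List.nodup_append']
    refine ⟨nd1, nd2, ?_⟩
    intro a ha ha'
    exact (hS1 ha).2 ha'
  · intro w hw
    rcases List.mem_append.mp hw with hw | hw
    · exact ⟨by simp [hw], fun h => hx1 (h ▸ hw), (hS1 hw).1⟩
    · exact ⟨by simp [hw], fun h => hx2 (h ▸ hw), fun h => hy2 (h ▸ hw)⟩

section PatternOne

/-- Pattern 1: all three marked points lie in the cycle of `x0`. -/
def Pat1 (x1 x2 : Fin n) (c : List (Fin n) × List (Fin n) × List (Fin n)) : Prop :=
  x1 ∈ c.1 ∧ x2 ∈ c.1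

def sig1 (c : List (Fin n) × List (Fin n) × List (Fin n)) : ℕ := c.1.length

variable (x1 x2)

def pmin (c : List (Fin n) × List (Fin n) × List (Fin n)) : ℕ :=
  min (c.1.idxOf x1) (c.1.idxOf x2)

def pmax (c : List (Fin n) × List (Fin n) × List (Fin n)) : ℕ :=
  max (c.1.idxOf x1) (c.1.idxOf x2)

def wmin (c : List (Fin n) × List (Fin n) × List (Fin n)) : Fin n :=
  if c.1.idxOf x1 < c.1.idxOf x2 then x1 else x2

def wmax (c : List (Fin n) × List (Fin n) × List (Fin n)) : Fin n :=
  if c.1.idxOf x1 < c.1.idxOf x2 then x2 else x1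

def segA (c : List (Fin n) × List (Fin n) × List (Fin n)) : List (Fin n) :=
  (c.1.drop 1).take (pmin x1 x2 c - 1)

def segB (c : List (Fin n) × List (Fin n) × List (Fin n)) : List (Fin n) :=
  (c.1.drop (pmin x1 x2 c + 1)).take (pmax x1 x2 c - pmin x1 x2 c - 1)

def segC (c : List (Fin n) × List (Fin n) × List (Fin n)) : List (Fin n) :=
  c.1.drop (pmax x1 x2 c + 1)

def u1 (c : List (Fin n) × List (Fin n) × List (Fin n)) : List (Fin n) :=
  segA x1 x2 c ++ (segB x1 x2 c ++ segC x1 x2 c)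

variable {x1 x2}

lemma u1_spec (h01 : x0 ≠ x1) (h02 : x0 ≠ x2) (h12 : x1 ≠ x2)
    {c : List (Fin n) × List (Fin n) × List (Fin n)}
    (hc : c ∈ TT s n m x0 x1 x2) (hp : Pat1 x1 x2 c) :
    (u1 x1 x2 c).Nodup ∧ (∀ z ∈ u1 x1 x2 c, z ∈ NSset x0 x1 x2) ∧
      (u1 x1 x2 c).length = sig1 c - 3 ∧
      (∀ z ∈ u1 x1 x2 c, z ∈ Oset x0 x1 x2 c) ∧
      c.1 = x0 :: (segA x1 x2 c ++ wmin x1 x2 c :: (segB x1 x2 c ++ wmax x1 x2 c :: segC x1 x2 c)) ∧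
      c.2.1 = c.1.rotate (c.1.idxOf x1) ∧ c.2.2 = c.1.rotate (c.1.idxOf x2) ∧
      (segA x1 x2 c).length = pmin x1 x2 c - 1 ∧
      (segB x1 x2 c).length = pmax x1 x2 c - pmin x1 x2 c - 1 ∧
      1 ≤ c.1.idxOf x1 ∧ 1 ≤ c.1.idxOf x2 ∧ c.1.idxOf x1 ≠ c.1.idxOf x2 ∧
      c.1.idxOf x1 < sig1 c ∧ c.1.idxOf x2 < sig1 c ∧ 3 ≤ sig1 c := by
  obtain ⟨g, hg, e0, e1, e2⟩ := image_spec hc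
  obtain ⟨hp1, hp2⟩ := hp
  have hx0 : x0 ∈ g.support := by
    rw [← e0] at hp1
    exact (mem_toList_iff.mp hp1).2
  have hrot1 : c.2.1 = c.1.rotate (c.1.idxOf x1) := by
    rw [← e0, ← e1]
    exact toList_rotate (e0 ▸ hp1)
  have hrot2 : c.2.2 = c.1.rotate (c.1.idxOf x2) := by
    rw [← e0, ← e2]
    exact toList_rotate (e0 ▸ hp2)
  have hi0 : 0 < c.1.idxOf x1 := by
    rw [← e0] at hp1 ⊢
    exact indexOf_pos hx0 hp1 h01.symm
  have hj0 : 0 < c.1.idxOf x2 := by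
    rw [← e0] at hp2 ⊢
    exact indexOf_pos hx0 hp2 h02.symm
  have hilt : c.1.idxOf x1 < c.1.length := List.idxOf_lt_length_iff.mpr hp1
  have hjlt : c.1.idxOf x2 < c.1.length := List.idxOf_lt_length_iff.mpr hp2
  have hij : c.1.idxOf x1 ≠ c.1.idxOf x2 := by
    intro h
    apply h12
    have h1 := List.getElem_idxOf hilt
    have h2 := List.getElem_idxOf hjlt
    simp only [h] at h1
    exact h1.symm.trans h2
  have hlen3 : 3 ≤ c.1.length := by
    have hsub : ({x0, x1, x2} : Finset (Fin n)) ⊆ c.1.toFinset := by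
      intro w hw
      simp only [Finset.mem_insert, Finset.mem_singleton] at hw
      rcases hw with rfl | rfl | rfl
      · rw [List.mem_toFinset, ← e0]
        exact mem_toList_self hx0
      · rwa [List.mem_toFinset]
      · rwa [List.mem_toFinset]
    have h3 : ({x0, x1, x2} : Finset (Fin n)).card = 3 := by
      rw [Finset.card_insert_of_notMem (by simp [h01, h02]),
        Finset.card_insert_of_notMem (by simp [h12]), Finset.card_singleton]
    have := Finset.card_le_card hsub
    rw [h3] at this
    have hnd : c.1.Nodup := by rw [← e0]; exact nodup_toList g x0
    rwa [List.toFinset_card_of_nodup hnd] at this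
  have hdec : c.1 = x0 :: (segA x1 x2 c ++ wmin x1 x2 c ::
      (segB x1 x2 c ++ wmax x1 x2 c :: segC x1 x2 c)) := by
    rcases lt_or_gt_of_ne hij with hlt | hlt
    · have h := toList_split2 hx0 (e0 ▸ hp1) (e0 ▸ hp2) (by rw [e0]; exact hlt) h01.symm
      rw [e0] at h
      rw [segA, segB, segC, wmin, wmax, pmin, pmax, if_pos hlt, if_pos hlt,
        min_eq_left hlt.le, max_eq_right hlt.le]
      exact h
    · have h := toList_split2 hx0 (e0 ▸ hp2) (e0 ▸ hp1) (by rw [e0]; exact hlt) h02.symm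
      rw [e0] at h
      rw [segA, segB, segC, wmin, wmax, pmin, pmax, if_neg (by omega), if_neg (by omega),
        min_eq_right hlt.le, max_eq_left hlt.le]
      exact h
  have hnd0 : c.1.Nodup := by rw [← e0]; exact nodup_toList g x0
  have hdecomp := nodup_decomp3 hdec hnd0
  have hAlen : (segA x1 x2 c).length = pmin x1 x2 c - 1 := by
    rw [segA, List.length_take, List.length_drop]
    have : pmin x1 x2 c < c.1.length := by
      rw [pmin]; omega
    omega
  have hBlen : (segB x1 x2 c).length = pmax x1 x2 c - pmin x1 x2 c - 1 := by
    rw [segB, List.length_take, List.length_drop]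
    have : pmax x1 x2 c < c.1.length := by
      rw [pmax]; omega
    omega
  have hwne : ∀ w, w ≠ wmin x1 x2 c → w ≠ wmax x1 x2 c → w ≠ x1 ∧ w ≠ x2 := by
    intro w hw1 hw2
    rw [wmin] at hw1
    rw [wmax] at hw2
    by_cases h : c.1.idxOf x1 < c.1.idxOf x2
    · rw [if_pos h] at hw1; rw [if_pos h] at hw2; exact ⟨hw1, hw2⟩
    · rw [if_neg h] at hw1; rw [if_neg h] at hw2; exact ⟨hw2, hw1⟩
  refine ⟨hdecomp.1, ?_, ?_, ?_, hdec, hrot1, hrot2, hAlen, hBlen, hi0, hj0, hij,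
    hilt, hjlt, hlen3⟩
  · intro z hz
    obtain ⟨_, hzx0, hzwmin, hzwmax⟩ := hdecomp.2 z hz
    obtain ⟨hz1, hz2⟩ := hwne z hzwmin hzwmax
    exact mem_NSset hzx0 hz1 hz2
  · rw [u1, List.length_append, List.length_append, hAlen, hBlen, segC, List.length_drop,
      sig1]
    have hpm : pmin x1 x2 c < pmax x1 x2 c := by
      rw [pmin, pmax]; omega
    have hql : pmax x1 x2 c < c.1.length := by
      rw [pmax]; omega
    have hp1' : 1 ≤ pmin x1 x2 c := by
      rw [pmin]; omega
    omega
  · intro z hz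
    rw [mem_Oset_iff]
    exact Or.inl (Or.inr (hdecomp.2 z hz).1)

def finPairEmb {N : ℕ} (a b : Fin N) (h : a ≠ b) : Fin 2 ↪ Fin N :=
  ⟨![a, b], by
    intro u u' huv
    fin_cases u <;> fin_cases u' <;> simp_all⟩

lemma slice1_card (h01 : x0 ≠ x1) (h02 : x0 ≠ x2) (h12 : x1 ≠ x2) (a : ℕ) :
    ((TT s n m x0 x1 x2).filter fun c => Pat1 x1 x2 c ∧ sig1 c = a).card ≤
      (a - 1).descFactorial 2 * (n - 3).descFactorial (a - 3) := by
  classical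
  set X := (TT s n m x0 x1 x2).filter (fun c => Pat1 x1 x2 c ∧ sig1 c = a) with hX
  rw [← Fintype.card_coe X]
  have htarget : (a - 1).descFactorial 2 * (n - 3).descFactorial (a - 3)
      = Fintype.card ((Fin 2 ↪ Fin (a - 1)) × (Fin (a - 3) ↪ ↥(NSset x0 x1 x2))) := by
    rw [Fintype.card_prod, Fintype.card_embedding_eq, Fintype.card_embedding_eq,
      Fintype.card_coe, Fintype.card_fin, Fintype.card_fin, Fintype.card_fin,
      card_NSset h01 h02 h12]
  rw [htarget]
  have hmem : ∀ c : ↥X, c.1 ∈ TT s n m x0 x1 x2 ∧ (Pat1 x1 x2 c.1 ∧ sig1 c.1 = a) :=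
    fun c => Finset.mem_filter.mp c.2
  have hspec : ∀ c : ↥X, _ := fun c => u1_spec h01 h02 h12 (hmem c).1 (hmem c).2.1
  have hnum : ∀ c : ↥X, 1 ≤ c.1.1.idxOf x1 ∧ 1 ≤ c.1.1.idxOf x2 ∧
      c.1.1.idxOf x1 ≠ c.1.1.idxOf x2 ∧ c.1.1.idxOf x1 < a ∧ c.1.1.idxOf x2 < a := by
    intro c
    obtain ⟨-, -, -, -, -, -, -, -, -, k1, k2, k3, k4, k5, -⟩ := hspec c
    have ha := (hmem c).2.2
    exact ⟨k1, k2, k3, by omega, by omega⟩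
  refine Fintype.card_le_of_injective (fun c =>
    (finPairEmb
      ⟨c.1.1.idxOf x1 - 1, by have h := hnum c; omega⟩
      ⟨c.1.1.idxOf x2 - 1, by have h := hnum c; omega⟩
      (by
        have h := hnum c
        simp only [ne_eq, Fin.mk.injEq]
        omega),
      listEmb (NSset x0 x1 x2) (u1 x1 x2 c.1) (hspec c).1 (hspec c).2.1
        (by
          have h := (hspec c).2.2.1
          have ha := (hmem c).2.2
          rw [h, ha]))) ?_
  intro c c' heq
  have heq' := heq
  simp only [Prod.mk.injEq] at heq'
  obtain ⟨he1, he2⟩ := heq'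
  have huu : u1 x1 x2 c.1 = u1 x1 x2 c'.1 := listEmb_inj he2
  have hidx1 : c.1.1.idxOf x1 = c'.1.1.idxOf x1 := by
    have h0 := congrFun (congrArg (fun (e : Fin 2 ↪ Fin (a - 1)) => (e : Fin 2 → Fin (a - 1))) he1) 0
    simp only [finPairEmb, Function.Embedding.coeFn_mk, Matrix.cons_val_zero] at h0
    have hv : c.1.1.idxOf x1 - 1 = c'.1.1.idxOf x1 - 1 := congrArg Fin.val h0
    have h := hnum c
    have h' := hnum c'
    omega
  have hidx2 : c.1.1.idxOf x2 = c'.1.1.idxOf x2 := by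
    have h0 := congrFun (congrArg (fun (e : Fin 2 ↪ Fin (a - 1)) => (e : Fin 2 → Fin (a - 1))) he1) 1
    simp only [finPairEmb, Function.Embedding.coeFn_mk, Matrix.cons_val_one,
      Matrix.head_cons] at h0
    have hv : c.1.1.idxOf x2 - 1 = c'.1.1.idxOf x2 - 1 := congrArg Fin.val h0
    have h := hnum c
    have h' := hnum c'
    omega
  have hpmin : pmin x1 x2 c.1 = pmin x1 x2 c'.1 := by rw [pmin, pmin, hidx1, hidx2]
  have hpmax : pmax x1 x2 c.1 = pmax x1 x2 c'.1 := by rw [pmax, pmax, hidx1, hidx2]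
  have hAlen : (segA x1 x2 c.1).length = (segA x1 x2 c'.1).length := by
    rw [(hspec c).2.2.2.2.2.2.2.1, (hspec c').2.2.2.2.2.2.2.1, hpmin]
  have happ1 := List.append_inj huu hAlen
  have hsegA : segA x1 x2 c.1 = segA x1 x2 c'.1 := happ1.1
  have hBlen : (segB x1 x2 c.1).length = (segB x1 x2 c'.1).length := by
    rw [(hspec c).2.2.2.2.2.2.2.2.1, (hspec c').2.2.2.2.2.2.2.2.1, hpmin, hpmax]
  have happ2 := List.append_inj happ1.2 hBlen
  have hsegB : segB x1 x2 c.1 = segB x1 x2 c'.1 := happ2.1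
  have hsegC : segC x1 x2 c.1 = segC x1 x2 c'.1 := happ2.2
  have hwmin : wmin x1 x2 c.1 = wmin x1 x2 c'.1 := by
    rw [wmin, wmin, hidx1, hidx2]
  have hwmax : wmax x1 x2 c.1 = wmax x1 x2 c'.1 := by
    rw [wmax, wmax, hidx1, hidx2]
  have hc1 : c.1.1 = c'.1.1 := by
    rw [(hspec c).2.2.2.2.1, (hspec c').2.2.2.2.1, hsegA, hsegB, hsegC, hwmin, hwmax]
  apply Subtype.ext
  have h21 : c.1.2.1 = c'.1.2.1 := by
    rw [(hspec c).2.2.2.2.2.1, (hspec c').2.2.2.2.2.1, hidx1, hc1]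
  have h22 : c.1.2.2 = c'.1.2.2 := by
    rw [(hspec c).2.2.2.2.2.2.1, (hspec c').2.2.2.2.2.2.1, hidx2, hc1]
  exact Prod.ext hc1 (Prod.ext h21 h22)

lemma descF_two (N : ℕ) : N.descFactorial 2 = N * (N - 1) := by
  simp [Nat.descFactorial]
  ring

lemma classSum1 (hm : m ≠ 0) (h01 : x0 ≠ x1) (h02 : x0 ≠ x2) (h12 : x1 ≠ x2) :
    ∑ c ∈ (TT s n m x0 x1 x2).filter (Pat1 x1 x2),
        (n - (Oset x0 x1 x2 c).card).factorial ≤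
      (∑ a ∈ DD s m, (a - 1) * (a - 2)) * (n - 3).factorial := by
  classical
  have hmaps : ∀ c ∈ (TT s n m x0 x1 x2).filter (Pat1 x1 x2), sig1 c ∈ DD s m := by
    intro c hc
    obtain ⟨hcT, hpat⟩ := Finset.mem_filter.mp hc
    obtain ⟨g, hg, e0, e1, e2⟩ := image_spec hcT
    rw [sig1, ← e0]
    apply toList_len_mem_DD hg hm
    intro hnil
    rw [e0] at hnil
    exact absurd (hnil ▸ hpat.1) List.not_mem_nil
  rw [← Finset.sum_fiberwise_of_maps_to hmaps]
  have hinner : ∀ a ∈ DD s m,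
      ∑ c ∈ ((TT s n m x0 x1 x2).filter (Pat1 x1 x2)).filter (fun c => sig1 c = a),
        (n - (Oset x0 x1 x2 c).card).factorial ≤ ((a - 1) * (a - 2)) * (n - 3).factorial := by
    intro a _
    have hff : ((TT s n m x0 x1 x2).filter (Pat1 x1 x2)).filter (fun c => sig1 c = a)
        = (TT s n m x0 x1 x2).filter (fun c => Pat1 x1 x2 c ∧ sig1 c = a) := by
      rw [Finset.filter_filter]
    have hstep : ∀ c ∈ ((TT s n m x0 x1 x2).filter (Pat1 x1 x2)).filter
        (fun c => sig1 c = a),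
        (n - (Oset x0 x1 x2 c).card).factorial ≤ (n - (3 + (a - 3))).factorial := by
      intro c hc
      rw [hff, Finset.mem_filter] at hc
      obtain ⟨hcT, hpat, hsig⟩ := hc
      have hspec := u1_spec h01 h02 h12 hcT hpat
      have hO : 3 + (a - 3) ≤ (Oset x0 x1 x2 c).card := by
        have := Oset_card_ge h01 h02 h12 (u1 x1 x2 c) hspec.1 hspec.2.2.2.1
          (fun z hz => NSset_spec (hspec.2.1 z hz))
        rwa [hspec.2.2.1, hsig] at this
      exact Nat.factorial_le (Nat.sub_le_sub_left hO n)
    calc ∑ c ∈ ((TT s n m x0 x1 x2).filter (Pat1 x1 x2)).filter (fun c => sig1 c = a),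
          (n - (Oset x0 x1 x2 c).card).factorial
        ≤ (((TT s n m x0 x1 x2).filter (Pat1 x1 x2)).filter (fun c => sig1 c = a)).card
            * (n - (3 + (a - 3))).factorial := by
          simpa using Finset.sum_le_card_nsmul _ _ _ hstep
      _ ≤ ((a - 1).descFactorial 2 * (n - 3).descFactorial (a - 3))
            * (n - (3 + (a - 3))).factorial := by
          apply Nat.mul_le_mul_right
          rw [hff]
          exact slice1_card h01 h02 h12 a
      _ ≤ ((a - 1) * (a - 2)) * (n - 3).factorial := by
          rw [descF_two, mul_assoc]
          have h := descF_mul_factorial_le (n - 3) (a - 3)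
          rw [show n - 3 - (a - 3) = n - (3 + (a - 3)) by omega] at h
          calc (a - 1) * (a - 1 - 1) * ((n - 3).descFactorial (a - 3)
                * (n - (3 + (a - 3))).factorial)
              ≤ (a - 1) * (a - 1 - 1) * (n - 3).factorial := by
                exact Nat.mul_le_mul_left _ h
            _ = ((a - 1) * (a - 2)) * (n - 3).factorial := by
                rw [show a - 1 - 1 = a - 2 by omega]
  calc ∑ a ∈ DD s m,
        ∑ c ∈ ((TT s n m x0 x1 x2).filter (Pat1 x1 x2)).filter (fun c => sig1 c = a),
          (n - (Oset x0 x1 x2 c).card).factorial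
      ≤ ∑ a ∈ DD s m, ((a - 1) * (a - 2)) * (n - 3).factorial :=
        Finset.sum_le_sum hinner
    _ = (∑ a ∈ DD s m, (a - 1) * (a - 2)) * (n - 3).factorial := by
        rw [Finset.sum_mul]

end PatternOne

section MainSplit

lemma main_split_spec {g : Equiv.Perm (Fin n)} {p q r : Fin n}
    (hq : q ∈ g.toList p) (hr : r ∉ g.toList p)
    (hqp : q ≠ p) (hrp : r ≠ p) (hrq : r ≠ q) :
    (((g.toList p).drop 1).take ((g.toList p).idxOf q - 1)
        ++ ((g.toList p).drop ((g.toList p).idxOf q + 1) ++ (g.toList r).drop 1)).Nodup ∧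
    (∀ z ∈ ((g.toList p).drop 1).take ((g.toList p).idxOf q - 1)
        ++ ((g.toList p).drop ((g.toList p).idxOf q + 1) ++ (g.toList r).drop 1),
        (z ∈ g.toList p ∨ z ∈ g.toList r) ∧ z ≠ p ∧ z ≠ q ∧ z ≠ r) ∧
    (((g.toList p).drop 1).take ((g.toList p).idxOf q - 1)
        ++ ((g.toList p).drop ((g.toList p).idxOf q + 1) ++ (g.toList r).drop 1)).length
      = (g.toList p).length + max (g.toList r).length 1 - 3 ∧
    g.toList p = p :: (((g.toList p).drop 1).take ((g.toList p).idxOf q - 1)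
        ++ q :: (g.toList p).drop ((g.toList p).idxOf q + 1)) ∧
    g.toList q = (g.toList p).rotate ((g.toList p).idxOf q) ∧
    (((g.toList p).drop 1).take ((g.toList p).idxOf q - 1)).length
      = (g.toList p).idxOf q - 1 ∧
    1 ≤ (g.toList p).idxOf q ∧ (g.toList p).idxOf q < (g.toList p).length ∧
    2 ≤ (g.toList p).length ∧
    (g.toList r = [] ∨ g.toList r = r :: (g.toList r).drop 1) := by
  have hpsup : p ∈ g.support := (mem_toList_iff.mp hq).2
  have hi0 : 0 < (g.toList p).idxOf q := indexOf_pos hpsup hq hqp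
  have hilt : (g.toList p).idxOf q < (g.toList p).length := List.idxOf_lt_length_iff.mpr hq
  have hdec := toList_split1 hpsup hq hqp
  have hnd2 := nodup_decomp2 hdec (nodup_toList g p)
  have htailf : ∀ z ∈ (g.toList r).drop 1, z ∈ g.toList r ∧ z ≠ p ∧ z ≠ q ∧ z ≠ r := by
    intro z hz
    have hzt : z ∈ g.toList r := drop1_subset hz
    refine ⟨hzt, ?_, ?_, drop1_ne_self hz⟩
    · rintro rfl
      exact hr (toList_sym hzt)
    · rintro rfl
      exact hr (common_mem hq hzt)
  have hdisj : ∀ z ∈ ((g.toList p).drop 1).take ((g.toList p).idxOf q - 1)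
      ++ (g.toList p).drop ((g.toList p).idxOf q + 1), z ∉ (g.toList r).drop 1 := by
    intro z hz hz'
    exact hr (common_mem ((hnd2.2 z hz).1) (drop1_subset hz'))
  have hndA : (((g.toList p).drop 1).take ((g.toList p).idxOf q - 1)).Nodup := by
    have := hnd2.1
    rw [List.nodup_append'] at this
    exact this.1
  have hndB : ((g.toList p).drop ((g.toList p).idxOf q + 1)).Nodup := by
    have := hnd2.1
    rw [List.nodup_append'] at this
    exact this.2.1
  have hdAB : ∀ z ∈ ((g.toList p).drop 1).take ((g.toList p).idxOf q - 1),
      z ∉ (g.toList p).drop ((g.toList p).idxOf q + 1) := by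
    have := hnd2.1
    rw [List.nodup_append'] at this
    exact fun z hz hz' => this.2.2 hz hz'
  have hndT : ((g.toList r).drop 1).Nodup := (List.drop_sublist _ _).nodup (nodup_toList g r)
  have hAlen : (((g.toList p).drop 1).take ((g.toList p).idxOf q - 1)).length
      = (g.toList p).idxOf q - 1 := by
    rw [List.length_take, List.length_drop]
    omega
  have hlen2 : 2 ≤ (g.toList p).length := by
    have hne0 : (g.toList p).length ≠ 0 := by
      intro h
      rw [List.length_eq_zero_iff] at h
      rw [h] at hq
      exact absurd hq List.not_mem_nil
    have hne1 : (g.toList p).length ≠ 1 := toList_length_ne_one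
    omega
  refine ⟨?_, ?_, ?_, hdec, toList_rotate hq, hAlen, hi0, hilt, hlen2, ?_⟩
  · rw [List.nodup_append', List.nodup_append']
    refine ⟨hndA, ⟨hndB, hndT, ?_⟩, ?_⟩
    · intro z hz hz'
      exact hdisj z (List.mem_append.mpr (Or.inr hz)) hz'
    · intro z hz hz'
      rcases List.mem_append.mp hz' with h | h
      · exact hdAB z hz h
      · exact hdisj z (List.mem_append.mpr (Or.inl hz)) h
  · intro z hz
    rcases List.mem_append.mp hz with h | h'
    · have := hnd2.2 z (List.mem_append.mpr (Or.inl h))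
      refine ⟨Or.inl this.1, this.2.1, this.2.2, ?_⟩
      rintro rfl
      exact hr this.1
    · rcases List.mem_append.mp h' with h | h
      · have := hnd2.2 z (List.mem_append.mpr (Or.inr h))
        refine ⟨Or.inl this.1, this.2.1, this.2.2, ?_⟩
        rintro rfl
        exact hr this.1
      · have := htailf z h
        exact ⟨Or.inr this.1, this.2⟩
  · rw [List.length_append, List.length_append, hAlen, List.length_drop, List.length_drop]
    have hT : (g.toList r).length ≠ 1 := toList_length_ne_one
    omega
  · by_cases h : g.toList r = []
    · exact Or.inl h
    · right
      apply toList_cons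
      by_contra hcon
      exact h (toList_eq_nil_iff.mpr hcon)

end MainSplit

section PatternTwo

/-- Pattern 2: `x1` lies in the cycle of `x0`, while `x2` lies elsewhere. -/
def Pat2 (x1 x2 : Fin n) (c : List (Fin n) × List (Fin n) × List (Fin n)) : Prop :=
  x1 ∈ c.1 ∧ x2 ∉ c.1

def sig2 (c : List (Fin n) × List (Fin n) × List (Fin n)) : ℕ × ℕ :=
  (c.1.length, max c.2.2.length 1)

def u2 (x1 : Fin n) (c : List (Fin n) × List (Fin n) × List (Fin n)) : List (Fin n) :=
  (c.1.drop 1).take (c.1.idxOf x1 - 1) ++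
    (c.1.drop (c.1.idxOf x1 + 1) ++ c.2.2.drop 1)

lemma u2_spec (h01 : x0 ≠ x1) (h02 : x0 ≠ x2) (h12 : x1 ≠ x2)
    {c : List (Fin n) × List (Fin n) × List (Fin n)}
    (hc : c ∈ TT s n m x0 x1 x2) (hp : Pat2 x1 x2 c) :
    (u2 x1 c).Nodup ∧ (∀ z ∈ u2 x1 c, z ∈ NSset x0 x1 x2) ∧
      (u2 x1 c).length = (sig2 c).1 + (sig2 c).2 - 3 ∧
      (∀ z ∈ u2 x1 c, z ∈ Oset x0 x1 x2 c) ∧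
      c.1 = x0 :: ((c.1.drop 1).take (c.1.idxOf x1 - 1) ++
        x1 :: c.1.drop (c.1.idxOf x1 + 1)) ∧
      c.2.1 = c.1.rotate (c.1.idxOf x1) ∧
      ((c.1.drop 1).take (c.1.idxOf x1 - 1)).length = c.1.idxOf x1 - 1 ∧
      1 ≤ c.1.idxOf x1 ∧ c.1.idxOf x1 < c.1.length ∧ 2 ≤ c.1.length ∧
      (c.2.2 = [] ∨ c.2.2 = x2 :: c.2.2.drop 1) := by
  obtain ⟨g, hg, e0, e1, e2⟩ := image_spec hc
  have hq : x1 ∈ g.toList x0 := by rw [e0]; exact hp.1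
  have hr : x2 ∉ g.toList x0 := by rw [e0]; exact hp.2
  have H := main_split_spec hq hr h01.symm h02.symm h12.symm
  rw [e0, e2] at H
  obtain ⟨Hnd, Hmem, Hlen, Hdec, Hrot, HAlen, Hi1, Hilt, Hlen2, Hfree⟩ := H
  rw [e1] at Hrot
  refine ⟨Hnd, ?_, ?_, ?_, Hdec, Hrot, HAlen, Hi1, Hilt, Hlen2, Hfree⟩
  · intro z hz
    obtain ⟨_, hz0, hz1, hz2⟩ := Hmem z hz
    exact mem_NSset hz0 hz1 hz2
  · exact Hlen
  · intro z hz
    obtain ⟨hzm, _, _, _⟩ := Hmem z hz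
    rw [mem_Oset_iff]
    rcases hzm with h | h
    · exact Or.inl (Or.inr h)
    · exact Or.inr (Or.inr (Or.inr h))

lemma slice2_card (h01 : x0 ≠ x1) (h02 : x0 ≠ x2) (h12 : x1 ≠ x2) (v : ℕ × ℕ) :
    ((TT s n m x0 x1 x2).filter fun c => Pat2 x1 x2 c ∧ sig2 c = v).card ≤
      (v.1 - 1) * (n - 3).descFactorial (v.1 + v.2 - 3) := by
  classical
  set X := (TT s n m x0 x1 x2).filter (fun c => Pat2 x1 x2 c ∧ sig2 c = v) with hX
  rw [← Fintype.card_coe X]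
  have htarget : (v.1 - 1) * (n - 3).descFactorial (v.1 + v.2 - 3)
      = Fintype.card (Fin (v.1 - 1) × (Fin (v.1 + v.2 - 3) ↪ ↥(NSset x0 x1 x2))) := by
    rw [Fintype.card_prod, Fintype.card_embedding_eq, Fintype.card_coe,
      Fintype.card_fin, Fintype.card_fin, card_NSset h01 h02 h12]
  rw [htarget]
  have hmem : ∀ c : ↥X, c.1 ∈ TT s n m x0 x1 x2 ∧ (Pat2 x1 x2 c.1 ∧ sig2 c.1 = v) :=
    fun c => Finset.mem_filter.mp c.2
  have hspec : ∀ c : ↥X, _ := fun c => u2_spec h01 h02 h12 (hmem c).1 (hmem c).2.1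
  have hnum : ∀ c : ↥X, 1 ≤ c.1.1.idxOf x1 ∧ c.1.1.idxOf x1 < v.1 := by
    intro c
    obtain ⟨-, -, -, -, -, -, -, k1, k2, -⟩ := hspec c
    have ha : (sig2 c.1).1 = v.1 := by rw [(hmem c).2.2]
    rw [sig2] at ha
    simp only at ha
    exact ⟨k1, by omega⟩
  refine Fintype.card_le_of_injective (fun c =>
    (⟨c.1.1.idxOf x1 - 1, by have h := hnum c; omega⟩,
      listEmb (NSset x0 x1 x2) (u2 x1 c.1) (hspec c).1 (hspec c).2.1
        (by
          have h := (hspec c).2.2.1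
          have ha := (hmem c).2.2
          rw [h, ha]))) ?_
  intro c c' heq
  simp only [Prod.mk.injEq] at heq
  obtain ⟨he1, he2⟩ := heq
  have huu : u2 x1 c.1 = u2 x1 c'.1 := listEmb_inj he2
  have hidx : c.1.1.idxOf x1 = c'.1.1.idxOf x1 := by
    have hv := congrArg Fin.val he1
    simp only at hv
    have h := hnum c
    have h' := hnum c'
    omega
  have hlen1 : c.1.1.length = c'.1.1.length := by
    have h1 : (sig2 c.1).1 = (sig2 c'.1).1 := by rw [(hmem c).2.2, (hmem c').2.2]
    rw [sig2, sig2] at h1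
    exact h1
  have hAlen : ((c.1.1.drop 1).take (c.1.1.idxOf x1 - 1)).length
      = ((c'.1.1.drop 1).take (c'.1.1.idxOf x1 - 1)).length := by
    rw [(hspec c).2.2.2.2.2.2.1, (hspec c').2.2.2.2.2.2.1, hidx]
  rw [u2, u2] at huu
  have happ1 := List.append_inj huu hAlen
  have hsegA := happ1.1
  have hBlen : (c.1.1.drop (c.1.1.idxOf x1 + 1)).length
      = (c'.1.1.drop (c'.1.1.idxOf x1 + 1)).length := by
    rw [List.length_drop, List.length_drop, hidx, hlen1]
  have happ2 := List.append_inj happ1.2 hBlen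
  have hsegB := happ2.1
  have htail := happ2.2
  have hc1 : c.1.1 = c'.1.1 := by
    rw [(hspec c).2.2.2.2.1, (hspec c').2.2.2.2.1, hsegA, hsegB]
  obtain ⟨g, hg, e0, e1, e2⟩ := image_spec (hmem c).1
  obtain ⟨g', hg', e0', e1', e2'⟩ := image_spec (hmem c').1
  have hfree : c.1.2.2 = c'.1.2.2 := by
    have hl : max c.1.2.2.length 1 = max c'.1.2.2.length 1 := by
      have h1 : (sig2 c.1).2 = (sig2 c'.1).2 := by rw [(hmem c).2.2, (hmem c').2.2]
      rw [sig2, sig2] at h1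
      exact h1
    rw [← e2, ← e2'] at hl htail ⊢
    exact comp_eq hl htail
  apply Subtype.ext
  have h21 : c.1.2.1 = c'.1.2.1 := by
    rw [(hspec c).2.2.2.2.2.1, (hspec c').2.2.2.2.2.1, hidx, hc1]
  exact Prod.ext hc1 (Prod.ext h21 hfree)

lemma classSum2 (hm : m ≠ 0) (h1M : (1 : ℝ) < (m : ℝ) ^ s)
    (h01 : x0 ≠ x1) (h02 : x0 ≠ x2) (h12 : x1 ≠ x2) :
    ∑ c ∈ (TT s n m x0 x1 x2).filter (Pat2 x1 x2),
        (n - (Oset x0 x1 x2 c).card).factorial ≤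
      ((DD s m).card * ∑ a ∈ DD s m, (a - 1)) * (n - 3).factorial := by
  classical
  have hmaps : ∀ c ∈ (TT s n m x0 x1 x2).filter (Pat2 x1 x2),
      sig2 c ∈ (DD s m) ×ˢ (DD s m) := by
    intro c hc
    obtain ⟨hcT, hpat⟩ := Finset.mem_filter.mp hc
    obtain ⟨g, hg, e0, e1, e2⟩ := image_spec hcT
    rw [Finset.mem_product, sig2]
    constructor
    · simp only [← e0]
      apply toList_len_mem_DD hg hm
      intro hnil
      rw [e0] at hnil
      exact absurd (hnil ▸ hpat.1) List.not_mem_nil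
    · simp only [← e2]
      exact maxLen_mem_DD hg hm h1M _
  rw [← Finset.sum_fiberwise_of_maps_to hmaps]
  have hinner : ∀ v ∈ (DD s m) ×ˢ (DD s m),
      ∑ c ∈ ((TT s n m x0 x1 x2).filter (Pat2 x1 x2)).filter (fun c => sig2 c = v),
        (n - (Oset x0 x1 x2 c).card).factorial ≤ (v.1 - 1) * (n - 3).factorial := by
    intro v _
    set L := v.1 + v.2 - 3 with hLdef
    have hff : ((TT s n m x0 x1 x2).filter (Pat2 x1 x2)).filter (fun c => sig2 c = v)
        = (TT s n m x0 x1 x2).filter (fun c => Pat2 x1 x2 c ∧ sig2 c = v) := by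
      rw [Finset.filter_filter]
    have hstep : ∀ c ∈ ((TT s n m x0 x1 x2).filter (Pat2 x1 x2)).filter
        (fun c => sig2 c = v),
        (n - (Oset x0 x1 x2 c).card).factorial ≤ (n - (3 + L)).factorial := by
      intro c hc
      rw [hff, Finset.mem_filter] at hc
      obtain ⟨hcT, hpat, hsig⟩ := hc
      have hspec := u2_spec h01 h02 h12 hcT hpat
      have hO : 3 + L ≤ (Oset x0 x1 x2 c).card := by
        have := Oset_card_ge h01 h02 h12 (u2 x1 c) hspec.1 hspec.2.2.2.1
          (fun z hz => NSset_spec (hspec.2.1 z hz))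
        rwa [hspec.2.2.1, hsig] at this
      exact Nat.factorial_le (Nat.sub_le_sub_left hO n)
    calc ∑ c ∈ ((TT s n m x0 x1 x2).filter (Pat2 x1 x2)).filter (fun c => sig2 c = v),
          (n - (Oset x0 x1 x2 c).card).factorial
        ≤ (((TT s n m x0 x1 x2).filter (Pat2 x1 x2)).filter (fun c => sig2 c = v)).card
            * (n - (3 + L)).factorial := by
          simpa using Finset.sum_le_card_nsmul _ _ _ hstep
      _ ≤ ((v.1 - 1) * (n - 3).descFactorial L) * (n - (3 + L)).factorial := by
          apply Nat.mul_le_mul_right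
          rw [hff]
          exact slice2_card h01 h02 h12 v
      _ ≤ (v.1 - 1) * (n - 3).factorial := by
          rw [mul_assoc]
          apply Nat.mul_le_mul_left
          have h := descF_mul_factorial_le (n - 3) L
          rwa [show n - 3 - L = n - (3 + L) by omega] at h
  calc ∑ v ∈ (DD s m) ×ˢ (DD s m),
        ∑ c ∈ ((TT s n m x0 x1 x2).filter (Pat2 x1 x2)).filter (fun c => sig2 c = v),
          (n - (Oset x0 x1 x2 c).card).factorial
      ≤ ∑ v ∈ (DD s m) ×ˢ (DD s m), (v.1 - 1) * (n - 3).factorial :=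
        Finset.sum_le_sum hinner
    _ = ((DD s m).card * ∑ a ∈ DD s m, (a - 1)) * (n - 3).factorial := by
        rw [Finset.sum_product]
        simp only [Finset.sum_const, smul_eq_mul]
        rw [← Finset.mul_sum, ← Finset.sum_mul, mul_assoc]

end PatternTwo

section PatternFour

/-- Pattern 4: `x2` lies in the cycle of `x1`, distinct from the orbit of `x0`. -/
def Pat4 (x1 x2 : Fin n) (c : List (Fin n) × List (Fin n) × List (Fin n)) : Prop :=
  x1 ∉ c.1 ∧ x2 ∉ c.1 ∧ x2 ∈ c.2.1

def sig4 (c : List (Fin n) × List (Fin n) × List (Fin n)) : ℕ × ℕ :=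
  (c.2.1.length, max c.1.length 1)

def u4 (x2 : Fin n) (c : List (Fin n) × List (Fin n) × List (Fin n)) : List (Fin n) :=
  (c.2.1.drop 1).take (c.2.1.idxOf x2 - 1) ++
    (c.2.1.drop (c.2.1.idxOf x2 + 1) ++ c.1.drop 1)

lemma u4_spec (h01 : x0 ≠ x1) (h02 : x0 ≠ x2) (h12 : x1 ≠ x2)
    {c : List (Fin n) × List (Fin n) × List (Fin n)}
    (hc : c ∈ TT s n m x0 x1 x2) (hp : Pat4 x1 x2 c) :
    (u4 x2 c).Nodup ∧ (∀ z ∈ u4 x2 c, z ∈ NSset x0 x1 x2) ∧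
      (u4 x2 c).length = (sig4 c).1 + (sig4 c).2 - 3 ∧
      (∀ z ∈ u4 x2 c, z ∈ Oset x0 x1 x2 c) ∧
      c.2.1 = x1 :: ((c.2.1.drop 1).take (c.2.1.idxOf x2 - 1) ++
        x2 :: c.2.1.drop (c.2.1.idxOf x2 + 1)) ∧
      c.2.2 = c.2.1.rotate (c.2.1.idxOf x2) ∧
      ((c.2.1.drop 1).take (c.2.1.idxOf x2 - 1)).length = c.2.1.idxOf x2 - 1 ∧
      1 ≤ c.2.1.idxOf x2 ∧ c.2.1.idxOf x2 < c.2.1.length ∧ 2 ≤ c.2.1.length ∧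
      (c.1 = [] ∨ c.1 = x0 :: c.1.drop 1) := by
  obtain ⟨g, hg, e0, e1, e2⟩ := image_spec hc
  have hq : x2 ∈ g.toList x1 := by rw [e1]; exact hp.2.2
  have hr : x0 ∉ g.toList x1 := by
    intro h
    have h2 := toList_sym h
    rw [e0] at h2
    exact hp.1 h2
  have H := main_split_spec hq hr h12.symm h01 h02
  rw [e1, e0] at H
  obtain ⟨Hnd, Hmem, Hlen, Hdec, Hrot, HAlen, Hi1, Hilt, Hlen2, Hfree⟩ := H
  rw [e2] at Hrot
  refine ⟨Hnd, ?_, ?_, ?_, Hdec, Hrot, HAlen, Hi1, Hilt, Hlen2, Hfree⟩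
  · intro z hz
    obtain ⟨_, hz1, hz2, hz0⟩ := Hmem z hz
    exact mem_NSset hz0 hz1 hz2
  · exact Hlen
  · intro z hz
    obtain ⟨hzm, _, _, _⟩ := Hmem z hz
    rw [mem_Oset_iff]
    rcases hzm with h | h
    · exact Or.inr (Or.inl (Or.inr h))
    · exact Or.inl (Or.inr h)

lemma slice4_card (h01 : x0 ≠ x1) (h02 : x0 ≠ x2) (h12 : x1 ≠ x2) (v : ℕ × ℕ) :
    ((TT s n m x0 x1 x2).filter fun c => Pat4 x1 x2 c ∧ sig4 c = v).card ≤
      (v.1 - 1) * (n - 3).descFactorial (v.1 + v.2 - 3) := by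
  classical
  set X := (TT s n m x0 x1 x2).filter (fun c => Pat4 x1 x2 c ∧ sig4 c = v) with hX
  rw [← Fintype.card_coe X]
  have htarget : (v.1 - 1) * (n - 3).descFactorial (v.1 + v.2 - 3)
      = Fintype.card (Fin (v.1 - 1) × (Fin (v.1 + v.2 - 3) ↪ ↥(NSset x0 x1 x2))) := by
    rw [Fintype.card_prod, Fintype.card_embedding_eq, Fintype.card_coe,
      Fintype.card_fin, Fintype.card_fin, card_NSset h01 h02 h12]
  rw [htarget]
  have hmem : ∀ c : ↥X, c.1 ∈ TT s n m x0 x1 x2 ∧ (Pat4 x1 x2 c.1 ∧ sig4 c.1 = v) :=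
    fun c => Finset.mem_filter.mp c.2
  have hspec : ∀ c : ↥X, _ := fun c => u4_spec h01 h02 h12 (hmem c).1 (hmem c).2.1
  have hnum : ∀ c : ↥X, 1 ≤ c.1.2.1.idxOf x2 ∧ c.1.2.1.idxOf x2 < v.1 := by
    intro c
    obtain ⟨-, -, -, -, -, -, -, k1, k2, -⟩ := hspec c
    have ha : (sig4 c.1).1 = v.1 := by rw [(hmem c).2.2]
    rw [sig4] at ha
    simp only at ha
    exact ⟨k1, by omega⟩
  refine Fintype.card_le_of_injective (fun c =>
    (⟨c.1.2.1.idxOf x2 - 1, by have h := hnum c; omega⟩,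
      listEmb (NSset x0 x1 x2) (u4 x2 c.1) (hspec c).1 (hspec c).2.1
        (by
          have h := (hspec c).2.2.1
          have ha := (hmem c).2.2
          rw [h, ha]))) ?_
  intro c c' heq
  simp only [Prod.mk.injEq] at heq
  obtain ⟨he1, he2⟩ := heq
  have huu : u4 x2 c.1 = u4 x2 c'.1 := listEmb_inj he2
  have hidx : c.1.2.1.idxOf x2 = c'.1.2.1.idxOf x2 := by
    have hv := congrArg Fin.val he1
    simp only at hv
    have h := hnum c
    have h' := hnum c'
    omega
  have hlen1 : c.1.2.1.length = c'.1.2.1.length := by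
    have h1 : (sig4 c.1).1 = (sig4 c'.1).1 := by rw [(hmem c).2.2, (hmem c').2.2]
    rw [sig4, sig4] at h1
    exact h1
  have hAlen : ((c.1.2.1.drop 1).take (c.1.2.1.idxOf x2 - 1)).length
      = ((c'.1.2.1.drop 1).take (c'.1.2.1.idxOf x2 - 1)).length := by
    rw [(hspec c).2.2.2.2.2.2.1, (hspec c').2.2.2.2.2.2.1, hidx]
  rw [u4, u4] at huu
  have happ1 := List.append_inj huu hAlen
  have hsegA := happ1.1
  have hBlen : (c.1.2.1.drop (c.1.2.1.idxOf x2 + 1)).length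
      = (c'.1.2.1.drop (c'.1.2.1.idxOf x2 + 1)).length := by
    rw [List.length_drop, List.length_drop, hidx, hlen1]
  have happ2 := List.append_inj happ1.2 hBlen
  have hsegB := happ2.1
  have htail := happ2.2
  have hc1 : c.1.2.1 = c'.1.2.1 := by
    rw [(hspec c).2.2.2.2.1, (hspec c').2.2.2.2.1, hsegA, hsegB]
  obtain ⟨g, hg, e0, e1, e2⟩ := image_spec (hmem c).1
  obtain ⟨g', hg', e0', e1', e2'⟩ := image_spec (hmem c').1
  have hfree : c.1.1 = c'.1.1 := by
    have hl : max c.1.1.length 1 = max c'.1.1.length 1 := by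
      have h1 : (sig4 c.1).2 = (sig4 c'.1).2 := by rw [(hmem c).2.2, (hmem c').2.2]
      rw [sig4, sig4] at h1
      exact h1
    rw [← e0, ← e0'] at hl htail ⊢
    exact comp_eq hl htail
  apply Subtype.ext
  have h22 : c.1.2.2 = c'.1.2.2 := by
    rw [(hspec c).2.2.2.2.2.1, (hspec c').2.2.2.2.2.1, hidx, hc1]
  exact Prod.ext hfree (Prod.ext hc1 h22)

lemma classSum4 (hm : m ≠ 0) (h1M : (1 : ℝ) < (m : ℝ) ^ s)
    (h01 : x0 ≠ x1) (h02 : x0 ≠ x2) (h12 : x1 ≠ x2) :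
    ∑ c ∈ (TT s n m x0 x1 x2).filter (Pat4 x1 x2),
        (n - (Oset x0 x1 x2 c).card).factorial ≤
      ((DD s m).card * ∑ a ∈ DD s m, (a - 1)) * (n - 3).factorial := by
  classical
  have hmaps : ∀ c ∈ (TT s n m x0 x1 x2).filter (Pat4 x1 x2),
      sig4 c ∈ (DD s m) ×ˢ (DD s m) := by
    intro c hc
    obtain ⟨hcT, hpat⟩ := Finset.mem_filter.mp hc
    obtain ⟨g, hg, e0, e1, e2⟩ := image_spec hcT
    rw [Finset.mem_product, sig4]
    constructor
    · simp only [← e1]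
      apply toList_len_mem_DD hg hm
      intro hnil
      rw [e1] at hnil
      exact absurd (hnil ▸ hpat.2.2) List.not_mem_nil
    · simp only [← e0]
      exact maxLen_mem_DD hg hm h1M _
  rw [← Finset.sum_fiberwise_of_maps_to hmaps]
  have hinner : ∀ v ∈ (DD s m) ×ˢ (DD s m),
      ∑ c ∈ ((TT s n m x0 x1 x2).filter (Pat4 x1 x2)).filter (fun c => sig4 c = v),
        (n - (Oset x0 x1 x2 c).card).factorial ≤ (v.1 - 1) * (n - 3).factorial := by
    intro v _
    set L := v.1 + v.2 - 3 with hLdef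
    have hff : ((TT s n m x0 x1 x2).filter (Pat4 x1 x2)).filter (fun c => sig4 c = v)
        = (TT s n m x0 x1 x2).filter (fun c => Pat4 x1 x2 c ∧ sig4 c = v) := by
      rw [Finset.filter_filter]
    have hstep : ∀ c ∈ ((TT s n m x0 x1 x2).filter (Pat4 x1 x2)).filter
        (fun c => sig4 c = v),
        (n - (Oset x0 x1 x2 c).card).factorial ≤ (n - (3 + L)).factorial := by
      intro c hc
      rw [hff, Finset.mem_filter] at hc
      obtain ⟨hcT, hpat, hsig⟩ := hc
      have hspec := u4_spec h01 h02 h12 hcT hpat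
      have hO : 3 + L ≤ (Oset x0 x1 x2 c).card := by
        have := Oset_card_ge h01 h02 h12 (u4 x2 c) hspec.1 hspec.2.2.2.1
          (fun z hz => NSset_spec (hspec.2.1 z hz))
        rwa [hspec.2.2.1, hsig] at this
      exact Nat.factorial_le (Nat.sub_le_sub_left hO n)
    calc ∑ c ∈ ((TT s n m x0 x1 x2).filter (Pat4 x1 x2)).filter (fun c => sig4 c = v),
          (n - (Oset x0 x1 x2 c).card).factorial
        ≤ (((TT s n m x0 x1 x2).filter (Pat4 x1 x2)).filter (fun c => sig4 c = v)).card
            * (n - (3 + L)).factorial := by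
          simpa using Finset.sum_le_card_nsmul _ _ _ hstep
      _ ≤ ((v.1 - 1) * (n - 3).descFactorial L) * (n - (3 + L)).factorial := by
          apply Nat.mul_le_mul_right
          rw [hff]
          exact slice4_card h01 h02 h12 v
      _ ≤ (v.1 - 1) * (n - 3).factorial := by
          rw [mul_assoc]
          apply Nat.mul_le_mul_left
          have h := descF_mul_factorial_le (n - 3) L
          rwa [show n - 3 - L = n - (3 + L) by omega] at h
  calc ∑ v ∈ (DD s m) ×ˢ (DD s m),
        ∑ c ∈ ((TT s n m x0 x1 x2).filter (Pat4 x1 x2)).filter (fun c => sig4 c = v),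
          (n - (Oset x0 x1 x2 c).card).factorial
      ≤ ∑ v ∈ (DD s m) ×ˢ (DD s m), (v.1 - 1) * (n - 3).factorial :=
        Finset.sum_le_sum hinner
    _ = ((DD s m).card * ∑ a ∈ DD s m, (a - 1)) * (n - 3).factorial := by
        rw [Finset.sum_product]
        simp only [Finset.sum_const, smul_eq_mul]
        rw [← Finset.mul_sum, ← Finset.sum_mul, mul_assoc]

end PatternFour

section PatternThree

/-- Pattern 3: `x2` lies in the cycle of `x0`, while `x1` lies elsewhere. -/
def Pat3 (x1 x2 : Fin n) (c : List (Fin n) × List (Fin n) × List (Fin n)) : Prop :=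
  x1 ∉ c.1 ∧ x2 ∈ c.1

def sig3 (c : List (Fin n) × List (Fin n) × List (Fin n)) : ℕ × ℕ :=
  (c.1.length, max c.2.1.length 1)

def u3 (x2 : Fin n) (c : List (Fin n) × List (Fin n) × List (Fin n)) : List (Fin n) :=
  (c.1.drop 1).take (c.1.idxOf x2 - 1) ++
    (c.1.drop (c.1.idxOf x2 + 1) ++ c.2.1.drop 1)

lemma u3_spec (h01 : x0 ≠ x1) (h02 : x0 ≠ x2) (h12 : x1 ≠ x2)
    {c : List (Fin n) × List (Fin n) × List (Fin n)}
    (hc : c ∈ TT s n m x0 x1 x2) (hp : Pat3 x1 x2 c) :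
    (u3 x2 c).Nodup ∧ (∀ z ∈ u3 x2 c, z ∈ NSset x0 x1 x2) ∧
      (u3 x2 c).length = (sig3 c).1 + (sig3 c).2 - 3 ∧
      (∀ z ∈ u3 x2 c, z ∈ Oset x0 x1 x2 c) ∧
      c.1 = x0 :: ((c.1.drop 1).take (c.1.idxOf x2 - 1) ++
        x2 :: c.1.drop (c.1.idxOf x2 + 1)) ∧
      c.2.2 = c.1.rotate (c.1.idxOf x2) ∧
      ((c.1.drop 1).take (c.1.idxOf x2 - 1)).length = c.1.idxOf x2 - 1 ∧
      1 ≤ c.1.idxOf x2 ∧ c.1.idxOf x2 < c.1.length ∧ 2 ≤ c.1.length ∧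
      (c.2.1 = [] ∨ c.2.1 = x1 :: c.2.1.drop 1) := by
  obtain ⟨g, hg, e0, e1, e2⟩ := image_spec hc
  have hq : x2 ∈ g.toList x0 := by rw [e0]; exact hp.2
  have hr : x1 ∉ g.toList x0 := by rw [e0]; exact hp.1
  have H := main_split_spec hq hr h02.symm h01.symm h12
  rw [e0, e1] at H
  obtain ⟨Hnd, Hmem, Hlen, Hdec, Hrot, HAlen, Hi1, Hilt, Hlen2, Hfree⟩ := H
  rw [e2] at Hrot
  refine ⟨Hnd, ?_, ?_, ?_, Hdec, Hrot, HAlen, Hi1, Hilt, Hlen2, Hfree⟩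
  · intro z hz
    obtain ⟨_, hz0, hz2, hz1⟩ := Hmem z hz
    exact mem_NSset hz0 hz1 hz2
  · exact Hlen
  · intro z hz
    obtain ⟨hzm, _, _, _⟩ := Hmem z hz
    rw [mem_Oset_iff]
    rcases hzm with h | h
    · exact Or.inl (Or.inr h)
    · exact Or.inr (Or.inl (Or.inr h))

lemma slice3_card (h01 : x0 ≠ x1) (h02 : x0 ≠ x2) (h12 : x1 ≠ x2) (v : ℕ × ℕ) :
    ((TT s n m x0 x1 x2).filter fun c => Pat3 x1 x2 c ∧ sig3 c = v).card ≤
      (v.1 - 1) * (n - 3).descFactorial (v.1 + v.2 - 3) := by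
  classical
  set X := (TT s n m x0 x1 x2).filter (fun c => Pat3 x1 x2 c ∧ sig3 c = v) with hX
  rw [← Fintype.card_coe X]
  have htarget : (v.1 - 1) * (n - 3).descFactorial (v.1 + v.2 - 3)
      = Fintype.card (Fin (v.1 - 1) × (Fin (v.1 + v.2 - 3) ↪ ↥(NSset x0 x1 x2))) := by
    rw [Fintype.card_prod, Fintype.card_embedding_eq, Fintype.card_coe,
      Fintype.card_fin, Fintype.card_fin, card_NSset h01 h02 h12]
  rw [htarget]
  have hmem : ∀ c : ↥X, c.1 ∈ TT s n m x0 x1 x2 ∧ (Pat3 x1 x2 c.1 ∧ sig3 c.1 = v) :=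
    fun c => Finset.mem_filter.mp c.2
  have hspec : ∀ c : ↥X, _ := fun c => u3_spec h01 h02 h12 (hmem c).1 (hmem c).2.1
  have hnum : ∀ c : ↥X, 1 ≤ c.1.1.idxOf x2 ∧ c.1.1.idxOf x2 < v.1 := by
    intro c
    obtain ⟨-, -, -, -, -, -, -, k1, k2, -⟩ := hspec c
    have ha : (sig3 c.1).1 = v.1 := by rw [(hmem c).2.2]
    rw [sig3] at ha
    simp only at ha
    exact ⟨k1, by omega⟩
  refine Fintype.card_le_of_injective (fun c =>
    (⟨c.1.1.idxOf x2 - 1, by have h := hnum c; omega⟩,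
      listEmb (NSset x0 x1 x2) (u3 x2 c.1) (hspec c).1 (hspec c).2.1
        (by
          have h := (hspec c).2.2.1
          have ha := (hmem c).2.2
          rw [h, ha]))) ?_
  intro c c' heq
  simp only [Prod.mk.injEq] at heq
  obtain ⟨he1, he2⟩ := heq
  have huu : u3 x2 c.1 = u3 x2 c'.1 := listEmb_inj he2
  have hidx : c.1.1.idxOf x2 = c'.1.1.idxOf x2 := by
    have hv := congrArg Fin.val he1
    simp only at hv
    have h := hnum c
    have h' := hnum c'
    omega
  have hlen1 : c.1.1.length = c'.1.1.length := by
    have h1 : (sig3 c.1).1 = (sig3 c'.1).1 := by rw [(hmem c).2.2, (hmem c').2.2]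
    rw [sig3, sig3] at h1
    exact h1
  have hAlen : ((c.1.1.drop 1).take (c.1.1.idxOf x2 - 1)).length
      = ((c'.1.1.drop 1).take (c'.1.1.idxOf x2 - 1)).length := by
    rw [(hspec c).2.2.2.2.2.2.1, (hspec c').2.2.2.2.2.2.1, hidx]
  rw [u3, u3] at huu
  have happ1 := List.append_inj huu hAlen
  have hsegA := happ1.1
  have hBlen : (c.1.1.drop (c.1.1.idxOf x2 + 1)).length
      = (c'.1.1.drop (c'.1.1.idxOf x2 + 1)).length := by
    rw [List.length_drop, List.length_drop, hidx, hlen1]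
  have happ2 := List.append_inj happ1.2 hBlen
  have hsegB := happ2.1
  have htail := happ2.2
  have hc1 : c.1.1 = c'.1.1 := by
    rw [(hspec c).2.2.2.2.1, (hspec c').2.2.2.2.1, hsegA, hsegB]
  obtain ⟨g, hg, e0, e1, e2⟩ := image_spec (hmem c).1
  obtain ⟨g', hg', e0', e1', e2'⟩ := image_spec (hmem c').1
  have hfree : c.1.2.1 = c'.1.2.1 := by
    have hl : max c.1.2.1.length 1 = max c'.1.2.1.length 1 := by
      have h1 : (sig3 c.1).2 = (sig3 c'.1).2 := by rw [(hmem c).2.2, (hmem c').2.2]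
      rw [sig3, sig3] at h1
      exact h1
    rw [← e1, ← e1'] at hl htail ⊢
    exact comp_eq hl htail
  apply Subtype.ext
  have h22 : c.1.2.2 = c'.1.2.2 := by
    rw [(hspec c).2.2.2.2.2.1, (hspec c').2.2.2.2.2.1, hidx, hc1]
  exact Prod.ext hc1 (Prod.ext hfree h22)

lemma classSum3 (hm : m ≠ 0) (h1M : (1 : ℝ) < (m : ℝ) ^ s)
    (h01 : x0 ≠ x1) (h02 : x0 ≠ x2) (h12 : x1 ≠ x2) :
    ∑ c ∈ (TT s n m x0 x1 x2).filter (Pat3 x1 x2),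
        (n - (Oset x0 x1 x2 c).card).factorial ≤
      ((DD s m).card * ∑ a ∈ DD s m, (a - 1)) * (n - 3).factorial := by
  classical
  have hmaps : ∀ c ∈ (TT s n m x0 x1 x2).filter (Pat3 x1 x2),
      sig3 c ∈ (DD s m) ×ˢ (DD s m) := by
    intro c hc
    obtain ⟨hcT, hpat⟩ := Finset.mem_filter.mp hc
    obtain ⟨g, hg, e0, e1, e2⟩ := image_spec hcT
    rw [Finset.mem_product, sig3]
    constructor
    · simp only [← e0]
      apply toList_len_mem_DD hg hm
      intro hnil
      rw [e0] at hnil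
      exact absurd (hnil ▸ hpat.2) List.not_mem_nil
    · simp only [← e1]
      exact maxLen_mem_DD hg hm h1M _
  rw [← Finset.sum_fiberwise_of_maps_to hmaps]
  have hinner : ∀ v ∈ (DD s m) ×ˢ (DD s m),
      ∑ c ∈ ((TT s n m x0 x1 x2).filter (Pat3 x1 x2)).filter (fun c => sig3 c = v),
        (n - (Oset x0 x1 x2 c).card).factorial ≤ (v.1 - 1) * (n - 3).factorial := by
    intro v _
    set L := v.1 + v.2 - 3 with hLdef
    have hff : ((TT s n m x0 x1 x2).filter (Pat3 x1 x2)).filter (fun c => sig3 c = v)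
        = (TT s n m x0 x1 x2).filter (fun c => Pat3 x1 x2 c ∧ sig3 c = v) := by
      rw [Finset.filter_filter]
    have hstep : ∀ c ∈ ((TT s n m x0 x1 x2).filter (Pat3 x1 x2)).filter
        (fun c => sig3 c = v),
        (n - (Oset x0 x1 x2 c).card).factorial ≤ (n - (3 + L)).factorial := by
      intro c hc
      rw [hff, Finset.mem_filter] at hc
      obtain ⟨hcT, hpat, hsig⟩ := hc
      have hspec := u3_spec h01 h02 h12 hcT hpat
      have hO : 3 + L ≤ (Oset x0 x1 x2 c).card := by
        have := Oset_card_ge h01 h02 h12 (u3 x2 c) hspec.1 hspec.2.2.2.1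
          (fun z hz => NSset_spec (hspec.2.1 z hz))
        rwa [hspec.2.2.1, hsig] at this
      exact Nat.factorial_le (Nat.sub_le_sub_left hO n)
    calc ∑ c ∈ ((TT s n m x0 x1 x2).filter (Pat3 x1 x2)).filter (fun c => sig3 c = v),
          (n - (Oset x0 x1 x2 c).card).factorial
        ≤ (((TT s n m x0 x1 x2).filter (Pat3 x1 x2)).filter (fun c => sig3 c = v)).card
            * (n - (3 + L)).factorial := by
          simpa using Finset.sum_le_card_nsmul _ _ _ hstep
      _ ≤ ((v.1 - 1) * (n - 3).descFactorial L) * (n - (3 + L)).factorial := by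
          apply Nat.mul_le_mul_right
          rw [hff]
          exact slice3_card h01 h02 h12 v
      _ ≤ (v.1 - 1) * (n - 3).factorial := by
          rw [mul_assoc]
          apply Nat.mul_le_mul_left
          have h := descF_mul_factorial_le (n - 3) L
          rwa [show n - 3 - L = n - (3 + L) by omega] at h
  calc ∑ v ∈ (DD s m) ×ˢ (DD s m),
        ∑ c ∈ ((TT s n m x0 x1 x2).filter (Pat3 x1 x2)).filter (fun c => sig3 c = v),
          (n - (Oset x0 x1 x2 c).card).factorial
      ≤ ∑ v ∈ (DD s m) ×ˢ (DD s m), (v.1 - 1) * (n - 3).factorial :=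
        Finset.sum_le_sum hinner
    _ = ((DD s m).card * ∑ a ∈ DD s m, (a - 1)) * (n - 3).factorial := by
        rw [Finset.sum_product]
        simp only [Finset.sum_const, smul_eq_mul]
        rw [← Finset.mul_sum, ← Finset.sum_mul, mul_assoc]

end PatternThree

/-- Pattern 5: the three marked points lie in three distinct orbits. -/
def Pat5 (x1 x2 : Fin n) (c : List (Fin n) × List (Fin n) × List (Fin n)) : Prop :=
  x1 ∉ c.1 ∧ x2 ∉ c.1 ∧ x2 ∉ c.2.1

def u5 (c : List (Fin n) × List (Fin n) × List (Fin n)) : List (Fin n) :=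
  c.1.drop 1 ++ (c.2.1.drop 1 ++ c.2.2.drop 1)

def sig5 (c : List (Fin n) × List (Fin n) × List (Fin n)) : ℕ × ℕ × ℕ :=
  (max c.1.length 1, max c.2.1.length 1, max c.2.2.length 1)

lemma u5_spec {c : List (Fin n) × List (Fin n) × List (Fin n)}
    (hc : c ∈ TT s n m x0 x1 x2) (hp : Pat5 x1 x2 c) :
    (u5 c).Nodup ∧ (∀ z ∈ u5 c, z ∈ NSset x0 x1 x2) ∧
      (u5 c).length = (sig5 c).1 - 1 + (((sig5 c).2.1 - 1) + ((sig5 c).2.2 - 1)) ∧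
      (∀ z ∈ u5 c, z ∈ Oset x0 x1 x2 c) := by
  obtain ⟨g, hg, e0, e1, e2⟩ := image_spec hc
  obtain ⟨c0, c1, c2⟩ := c
  simp only at e0 e1 e2
  subst e0; subst e1; subst e2
  obtain ⟨hp1, hp2, hp3⟩ := hp
  simp only [Pat5, u5, sig5] at *
  -- membership facts
  have m0 : ∀ z ∈ (g.toList x0).drop 1, z ≠ x0 ∧ z ≠ x1 ∧ z ≠ x2 := by
    intro z hz
    refine ⟨drop1_ne_self hz, ?_, ?_⟩
    · rintro rfl; exact hp1 (drop1_subset hz)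
    · rintro rfl; exact hp2 (drop1_subset hz)
  have m1 : ∀ z ∈ (g.toList x1).drop 1, z ≠ x0 ∧ z ≠ x1 ∧ z ≠ x2 := by
    intro z hz
    refine ⟨?_, drop1_ne_self hz, ?_⟩
    · rintro rfl; exact hp1 (toList_sym (drop1_subset hz))
    · rintro rfl; exact hp3 (drop1_subset hz)
  have m2 : ∀ z ∈ (g.toList x2).drop 1, z ≠ x0 ∧ z ≠ x1 ∧ z ≠ x2 := by
    intro z hz
    refine ⟨?_, ?_, drop1_ne_self hz⟩
    · rintro rfl; exact hp2 (toList_sym (drop1_subset hz))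
    · rintro rfl; exact hp3 (toList_sym (drop1_subset hz))
  have d01 : ∀ z ∈ (g.toList x0).drop 1, z ∉ (g.toList x1).drop 1 := by
    intro z hz hz'
    exact hp1 (common_mem (drop1_subset hz) (drop1_subset hz'))
  have d02 : ∀ z ∈ (g.toList x0).drop 1, z ∉ (g.toList x2).drop 1 := by
    intro z hz hz'
    exact hp2 (common_mem (drop1_subset hz) (drop1_subset hz'))
  have d12 : ∀ z ∈ (g.toList x1).drop 1, z ∉ (g.toList x2).drop 1 := by
    intro z hz hz'
    exact hp3 (common_mem (drop1_subset hz) (drop1_subset hz'))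
  have nd0 : ((g.toList x0).drop 1).Nodup := (List.drop_sublist _ _).nodup (nodup_toList g x0)
  have nd1 : ((g.toList x1).drop 1).Nodup := (List.drop_sublist _ _).nodup (nodup_toList g x1)
  have nd2 : ((g.toList x2).drop 1).Nodup := (List.drop_sublist _ _).nodup (nodup_toList g x2)
  refine ⟨?_, ?_, ?_, ?_⟩
  · rw [List.nodup_append', List.nodup_append']
    refine ⟨nd0, ⟨nd1, nd2, ?_⟩, ?_⟩
    · intro z hz hz'; exact d12 z hz hz'
    · intro z hz hz'
      rcases List.mem_append.mp hz' with h | h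
      · exact d01 z hz h
      · exact d02 z hz h
  · intro z hz
    rcases List.mem_append.mp hz with h | h
    · obtain ⟨a, b, cc⟩ := m0 z h; exact mem_NSset a b cc
    · rcases List.mem_append.mp h with h | h
      · obtain ⟨a, b, cc⟩ := m1 z h; exact mem_NSset a b cc
      · obtain ⟨a, b, cc⟩ := m2 z h; exact mem_NSset a b cc
  · simp only [List.length_append, List.length_drop]
    omega
  · intro z hz
    rw [mem_Oset_iff]
    rcases List.mem_append.mp hz with h | h
    · exact Or.inl (Or.inr (drop1_subset h))
    · rcases List.mem_append.mp h with h | h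
      · exact Or.inr (Or.inl (Or.inr (drop1_subset h)))
      · exact Or.inr (Or.inr (Or.inr (drop1_subset h)))

lemma slice5_card (h01 : x0 ≠ x1) (h02 : x0 ≠ x2) (h12 : x1 ≠ x2) (v : ℕ × ℕ × ℕ) :
    ((TT s n m x0 x1 x2).filter fun c => Pat5 x1 x2 c ∧ sig5 c = v).card ≤
      (n - 3).descFactorial (v.1 - 1 + ((v.2.1 - 1) + (v.2.2 - 1))) := by
  classical
  set L := v.1 - 1 + ((v.2.1 - 1) + (v.2.2 - 1)) with hL
  set X := (TT s n m x0 x1 x2).filter (fun c => Pat5 x1 x2 c ∧ sig5 c = v) with hX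
  rw [← Fintype.card_coe X]
  have htarget : (n - 3).descFactorial L = Fintype.card (Fin L ↪ ↥(NSset x0 x1 x2)) := by
    rw [Fintype.card_embedding_eq, Fintype.card_coe, Fintype.card_fin,
      card_NSset h01 h02 h12]
  rw [htarget]
  have hmem : ∀ c : ↥X, c.1 ∈ TT s n m x0 x1 x2 ∧ (Pat5 x1 x2 c.1 ∧ sig5 c.1 = v) :=
    fun c => Finset.mem_filter.mp c.2
  refine Fintype.card_le_of_injective (fun c =>
    listEmb (NSset x0 x1 x2) (u5 c.1)
      (u5_spec (hmem c).1 (hmem c).2.1).1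
      (u5_spec (hmem c).1 (hmem c).2.1).2.1
      (by
        have h := (u5_spec (hmem c).1 (hmem c).2.1).2.2.1
        have hv := (hmem c).2.2
        rw [h, hv])) ?_
  intro c c' heq
  have huu : u5 c.1 = u5 c'.1 := listEmb_inj heq
  obtain ⟨g, hg, e0, e1, e2⟩ := image_spec (hmem c).1
  obtain ⟨g', hg', e0', e1', e2'⟩ := image_spec (hmem c').1
  have hsig : sig5 c.1 = sig5 c'.1 := by rw [(hmem c).2.2, (hmem c').2.2]
  have hs0 : max c.1.1.length 1 = max c'.1.1.length 1 := congrArg (·.1) hsig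
  have hs1 : max c.1.2.1.length 1 = max c'.1.2.1.length 1 := congrArg (·.2.1) hsig
  have hs2 : max c.1.2.2.length 1 = max c'.1.2.2.length 1 := congrArg (·.2.2) hsig
  have hlen0 : (c.1.1.drop 1).length = (c'.1.1.drop 1).length := by
    simp only [List.length_drop]
    omega
  have happ1 := List.append_inj huu hlen0
  have hpart0 : c.1.1.drop 1 = c'.1.1.drop 1 := happ1.1
  have hlen1 : (c.1.2.1.drop 1).length = (c'.1.2.1.drop 1).length := by
    simp only [List.length_drop]
    omega
  have happ2 := List.append_inj happ1.2 hlen1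
  have hpart1 : c.1.2.1.drop 1 = c'.1.2.1.drop 1 := happ2.1
  have hpart2 : c.1.2.2.drop 1 = c'.1.2.2.drop 1 := happ2.2
  apply Subtype.ext
  have hc0 : c.1.1 = c'.1.1 := by
    rw [← e0, ← e0'] at hs0 hpart0 ⊢
    exact comp_eq hs0 hpart0
  have hc1 : c.1.2.1 = c'.1.2.1 := by
    rw [← e1, ← e1'] at hs1 hpart1 ⊢
    exact comp_eq hs1 hpart1
  have hc2 : c.1.2.2 = c'.1.2.2 := by
    rw [← e2, ← e2'] at hs2 hpart2 ⊢
    exact comp_eq hs2 hpart2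
  exact Prod.ext hc0 (Prod.ext hc1 hc2)

lemma classSum5 (hm : m ≠ 0) (h1M : (1 : ℝ) < (m : ℝ) ^ s)
    (h01 : x0 ≠ x1) (h02 : x0 ≠ x2) (h12 : x1 ≠ x2) :
    ∑ c ∈ (TT s n m x0 x1 x2).filter (Pat5 x1 x2),
        (n - (Oset x0 x1 x2 c).card).factorial ≤
      (DD s m).card ^ 3 * (n - 3).factorial := by
  classical
  have hmaps : ∀ c ∈ (TT s n m x0 x1 x2).filter (Pat5 x1 x2),
      sig5 c ∈ (DD s m) ×ˢ ((DD s m) ×ˢ (DD s m)) := by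
    intro c hc
    obtain ⟨hcT, _⟩ := Finset.mem_filter.mp hc
    obtain ⟨g, hg, e0, e1, e2⟩ := image_spec hcT
    rw [Finset.mem_product, Finset.mem_product, sig5]
    refine ⟨?_, ?_, ?_⟩ <;> simp only [← e0, ← e1, ← e2] <;>
      exact maxLen_mem_DD hg hm h1M _
  rw [← Finset.sum_fiberwise_of_maps_to hmaps]
  have hinner : ∀ v ∈ (DD s m) ×ˢ ((DD s m) ×ˢ (DD s m)),
      ∑ c ∈ ((TT s n m x0 x1 x2).filter (Pat5 x1 x2)).filter (fun c => sig5 c = v),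
        (n - (Oset x0 x1 x2 c).card).factorial ≤ (n - 3).factorial := by
    intro v _
    set L := v.1 - 1 + ((v.2.1 - 1) + (v.2.2 - 1)) with hLdef
    have hff : ((TT s n m x0 x1 x2).filter (Pat5 x1 x2)).filter (fun c => sig5 c = v)
        = (TT s n m x0 x1 x2).filter (fun c => Pat5 x1 x2 c ∧ sig5 c = v) := by
      rw [Finset.filter_filter]
    have hstep : ∀ c ∈ ((TT s n m x0 x1 x2).filter (Pat5 x1 x2)).filter
        (fun c => sig5 c = v),
        (n - (Oset x0 x1 x2 c).card).factorial ≤ (n - (3 + L)).factorial := by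
      intro c hc
      rw [hff, Finset.mem_filter] at hc
      obtain ⟨hcT, hpat, hsig⟩ := hc
      obtain ⟨hnd, hNS, hlen, hOmem⟩ := u5_spec hcT hpat
      have hO : 3 + L ≤ (Oset x0 x1 x2 c).card := by
        have := Oset_card_ge h01 h02 h12 (u5 c) hnd hOmem
          (fun z hz => NSset_spec (hNS z hz))
        rwa [hlen, hsig] at this
      exact Nat.factorial_le (Nat.sub_le_sub_left hO n)
    calc ∑ c ∈ ((TT s n m x0 x1 x2).filter (Pat5 x1 x2)).filter (fun c => sig5 c = v),
          (n - (Oset x0 x1 x2 c).card).factorial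
        ≤ (((TT s n m x0 x1 x2).filter (Pat5 x1 x2)).filter (fun c => sig5 c = v)).card
            * (n - (3 + L)).factorial := by
          simpa using Finset.sum_le_card_nsmul _ _ _ hstep
      _ ≤ (n - 3).descFactorial L * (n - (3 + L)).factorial := by
          apply Nat.mul_le_mul_right
          rw [hff]
          exact slice5_card h01 h02 h12 v
      _ ≤ (n - 3).factorial := by
          have h := descF_mul_factorial_le (n - 3) L
          rwa [show n - 3 - L = n - (3 + L) by omega] at h
  calc ∑ v ∈ (DD s m) ×ˢ ((DD s m) ×ˢ (DD s m)),
        ∑ c ∈ ((TT s n m x0 x1 x2).filter (Pat5 x1 x2)).filter (fun c => sig5 c = v),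
          (n - (Oset x0 x1 x2 c).card).factorial
      ≤ ∑ _v ∈ (DD s m) ×ˢ ((DD s m) ×ˢ (DD s m)), (n - 3).factorial :=
        Finset.sum_le_sum hinner
    _ = (DD s m).card ^ 3 * (n - 3).factorial := by
        rw [Finset.sum_const, Finset.card_product, Finset.card_product, smul_eq_mul]
        ring

lemma main_count (hm : m ≠ 0) (h1M : (1 : ℝ) < (m : ℝ) ^ s)
    (h01 : x0 ≠ x1) (h02 : x0 ≠ x2) (h12 : x1 ≠ x2) :
    (SS s n m).card ≤
      ((∑ a ∈ DD s m, (a - 1) * (a - 2)) +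
        (3 * ((DD s m).card * ∑ a ∈ DD s m, (a - 1)) + (DD s m).card ^ 3)) *
          (n - 3).factorial := by
  classical
  set T := TT s n m x0 x1 x2 with hT
  set f : List (Fin n) × List (Fin n) × List (Fin n) → ℕ :=
    fun c => (n - (Oset x0 x1 x2 c).card).factorial with hf
  have step0 : (SS s n m).card ≤ ∑ c ∈ T, f c := card_SS_le_sum
  have split1 : ∑ c ∈ T, f c =
      ∑ c ∈ T.filter (fun c => x1 ∈ c.1), f c +
        ∑ c ∈ T.filter (fun c => x1 ∉ c.1), f c := by
    rw [Finset.sum_filter_add_sum_filter_not]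
  have split2 : ∑ c ∈ T.filter (fun c => x1 ∈ c.1), f c =
      ∑ c ∈ (T.filter (fun c => x1 ∈ c.1)).filter (fun c => x2 ∈ c.1), f c +
        ∑ c ∈ (T.filter (fun c => x1 ∈ c.1)).filter (fun c => x2 ∉ c.1), f c := by
    rw [Finset.sum_filter_add_sum_filter_not]
  have split3 : ∑ c ∈ T.filter (fun c => x1 ∉ c.1), f c =
      ∑ c ∈ (T.filter (fun c => x1 ∉ c.1)).filter (fun c => x2 ∈ c.1), f c +
        ∑ c ∈ (T.filter (fun c => x1 ∉ c.1)).filter (fun c => x2 ∉ c.1), f c := by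
    rw [Finset.sum_filter_add_sum_filter_not]
  have split4 : ∑ c ∈ (T.filter (fun c => x1 ∉ c.1)).filter (fun c => x2 ∉ c.1), f c =
      ∑ c ∈ ((T.filter (fun c => x1 ∉ c.1)).filter (fun c => x2 ∉ c.1)).filter
          (fun c => x2 ∈ c.2.1), f c +
        ∑ c ∈ ((T.filter (fun c => x1 ∉ c.1)).filter (fun c => x2 ∉ c.1)).filter
          (fun c => x2 ∉ c.2.1), f c := by
    rw [Finset.sum_filter_add_sum_filter_not]
  have e1 : (T.filter (fun c => x1 ∈ c.1)).filter (fun c => x2 ∈ c.1)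
      = T.filter (Pat1 x1 x2) := by
    rw [Finset.filter_filter]
    apply Finset.filter_congr
    intro c _
    simp [Pat1]
  have e2 : (T.filter (fun c => x1 ∈ c.1)).filter (fun c => x2 ∉ c.1)
      = T.filter (Pat2 x1 x2) := by
    rw [Finset.filter_filter]
    apply Finset.filter_congr
    intro c _
    simp [Pat2]
  have e3 : (T.filter (fun c => x1 ∉ c.1)).filter (fun c => x2 ∈ c.1)
      = T.filter (Pat3 x1 x2) := by
    rw [Finset.filter_filter]
    apply Finset.filter_congr
    intro c _
    simp [Pat3]
  have e4 : ((T.filter (fun c => x1 ∉ c.1)).filter (fun c => x2 ∉ c.1)).filter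
      (fun c => x2 ∈ c.2.1) = T.filter (Pat4 x1 x2) := by
    rw [Finset.filter_filter, Finset.filter_filter]
    apply Finset.filter_congr
    intro c _
    simp [Pat4]
  have e5 : ((T.filter (fun c => x1 ∉ c.1)).filter (fun c => x2 ∉ c.1)).filter
      (fun c => x2 ∉ c.2.1) = T.filter (Pat5 x1 x2) := by
    rw [Finset.filter_filter, Finset.filter_filter]
    apply Finset.filter_congr
    intro c _
    simp [Pat5]
  have h1 := classSum1 (s := s) (n := n) hm h01 h02 h12
  have h2 := classSum2 (s := s) (n := n) hm h1M h01 h02 h12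
  have h3 := classSum3 (s := s) (n := n) hm h1M h01 h02 h12
  have h4 := classSum4 (s := s) (n := n) hm h1M h01 h02 h12
  have h5 := classSum5 (s := s) (n := n) hm h1M h01 h02 h12
  calc (SS s n m).card ≤ ∑ c ∈ T, f c := step0
    _ = ∑ c ∈ T.filter (Pat1 x1 x2), f c + ∑ c ∈ T.filter (Pat2 x1 x2), f c +
        (∑ c ∈ T.filter (Pat3 x1 x2), f c +
          (∑ c ∈ T.filter (Pat4 x1 x2), f c + ∑ c ∈ T.filter (Pat5 x1 x2), f c)) := by
        rw [split1, split2, split3, split4, e1, e2, e3, e4, e5]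
    _ ≤ (∑ a ∈ DD s m, (a - 1) * (a - 2)) * (n - 3).factorial +
        ((DD s m).card * ∑ a ∈ DD s m, (a - 1)) * (n - 3).factorial +
        (((DD s m).card * ∑ a ∈ DD s m, (a - 1)) * (n - 3).factorial +
          (((DD s m).card * ∑ a ∈ DD s m, (a - 1)) * (n - 3).factorial +
            (DD s m).card ^ 3 * (n - 3).factorial)) := by
        gcongr <;> assumption
    _ = ((∑ a ∈ DD s m, (a - 1) * (a - 2)) +
        (3 * ((DD s m).card * ∑ a ∈ DD s m, (a - 1)) + (DD s m).card ^ 3)) *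
          (n - 3).factorial := by
        ring

end Slices

lemma SS_eq : SS s n m = (Finset.univ.filter fun g : Equiv.Perm (Fin n) =>
    g ^ m = 1 ∧ ∀ d ∈ g.cycleType, (d : ℝ) < (m : ℝ) ^ s) :=
  Finset.filter_congr (fun _ _ => Iff.rfl)

lemma factorial_split (hn : 3 ≤ n) :
    (n.factorial : ℝ) = (n : ℝ) * ((n : ℝ) - 1) * ((n : ℝ) - 2) * ((n - 3).factorial : ℝ) := by
  obtain ⟨k, rfl⟩ : ∃ k, n = k + 3 := ⟨n - 3, by omega⟩
  have h : (k + 3).factorial = (k + 3) * ((k + 2) * ((k + 1) * k.factorial)) := by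
    rw [show k + 3 = (k + 2) + 1 by ring, Nat.factorial_succ,
      show k + 2 = (k + 1) + 1 by ring, Nat.factorial_succ, Nat.factorial_succ]
  rw [h]
  push_cast
  ring_nf

lemma rpow_two_mul (hm : (0:ℝ) ≤ (m:ℝ)) : (m : ℝ) ^ (2 * s) = ((m : ℝ) ^ s) ^ 2 := by
  rw [show (2 : ℝ) * s = s * 2 by ring, Real.rpow_mul hm]
  norm_num

lemma Wr_lt (hm0 : m ≠ 0) (h1M : (1 : ℝ) < (m : ℝ) ^ s) {K : ℝ} (hK1 : 1 ≤ K)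
    (hcard : ((DD s m).card : ℝ) ≤ K * (m : ℝ) ^ s) :
    ((((∑ a ∈ DD s m, (a - 1) * (a - 2)) +
        (3 * ((DD s m).card * ∑ a ∈ DD s m, (a - 1)) + (DD s m).card ^ 3)) : ℕ) : ℝ) <
      (1 + 3 * K + K ^ 2) * (m.divisors.card : ℝ) * ((m : ℝ) ^ s) ^ 2 := by
  have hM0 : (0 : ℝ) < (m : ℝ) ^ s := lt_trans one_pos h1M
  have hdd0 : (0 : ℝ) ≤ ((DD s m).card : ℝ) := by positivity
  have hddD : ((DD s m).card : ℝ) ≤ (m.divisors.card : ℝ) := by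
    exact_mod_cast card_DD_le
  have hD1 : (1 : ℝ) ≤ (m.divisors.card : ℝ) := by
    have : 0 < m.divisors.card :=
      Finset.card_pos.mpr ⟨1, Nat.one_mem_divisors.mpr hm0⟩
    exact_mod_cast this
  have hterm : ∀ a ∈ DD s m, ((a : ℝ) < (m : ℝ) ^ s ∧ 1 ≤ a) := by
    intro a ha
    obtain ⟨hadvd, haM⟩ := Finset.mem_filter.mp ha
    exact ⟨haM, Nat.pos_of_mem_divisors hadvd⟩
  have hW1 : (∑ a ∈ DD s m, ((a - 1 : ℕ) : ℝ) * ((a - 2 : ℕ) : ℝ)) <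
      (m.divisors.card : ℝ) * ((m : ℝ) ^ s) ^ 2 := by
    have hbound : ∀ a ∈ DD s m,
        (((a - 1 : ℕ)) : ℝ) * ((a - 2 : ℕ) : ℝ) < ((m : ℝ) ^ s) ^ 2 := by
      intro a ha
      obtain ⟨haM, ha1⟩ := hterm a ha
      have e1 : (((a - 1 : ℕ)) : ℝ) = (a : ℝ) - 1 := by
        push_cast [ha1]
        ring
      have e2 : (((a - 2 : ℕ)) : ℝ) ≤ ((a - 1 : ℕ) : ℝ) := by
        exact_mod_cast Nat.sub_le_sub_left (by omega) a
      have h2 : (((a - 1 : ℕ)) : ℝ) * ((a - 2 : ℕ) : ℝ) ≤ ((a : ℝ) - 1) * ((a : ℝ) - 1) := by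
        rw [← e1] at *
        apply mul_le_mul_of_nonneg_left e2 (by positivity)
      have h4 : (0 : ℝ) ≤ (a : ℝ) - 1 := by
        have : (1 : ℝ) ≤ (a : ℝ) := by exact_mod_cast ha1
        linarith
      nlinarith
    calc (∑ a ∈ DD s m, ((a - 1 : ℕ) : ℝ) * ((a - 2 : ℕ) : ℝ))
        < ∑ _a ∈ DD s m, ((m : ℝ) ^ s) ^ 2 :=
          Finset.sum_lt_sum_of_nonempty ⟨1, one_mem_DD hm0 h1M⟩ hbound
      _ = ((DD s m).card : ℝ) * ((m : ℝ) ^ s) ^ 2 := by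
          rw [Finset.sum_const, nsmul_eq_mul]
      _ ≤ (m.divisors.card : ℝ) * ((m : ℝ) ^ s) ^ 2 := by nlinarith
  have hS : (∑ a ∈ DD s m, ((a - 1 : ℕ) : ℝ)) ≤ ((DD s m).card : ℝ) * (m : ℝ) ^ s := by
    have hbound : ∀ a ∈ DD s m, (((a - 1 : ℕ)) : ℝ) ≤ (m : ℝ) ^ s := by
      intro a ha
      obtain ⟨haM, _⟩ := hterm a ha
      have : ((a - 1 : ℕ) : ℝ) ≤ (a : ℝ) := by
        exact_mod_cast Nat.sub_le a 1
      linarith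
    calc (∑ a ∈ DD s m, ((a - 1 : ℕ) : ℝ)) ≤ ∑ _a ∈ DD s m, (m : ℝ) ^ s :=
          Finset.sum_le_sum hbound
      _ = ((DD s m).card : ℝ) * (m : ℝ) ^ s := by rw [Finset.sum_const, nsmul_eq_mul]
  have hS0 : (0 : ℝ) ≤ ∑ a ∈ DD s m, ((a - 1 : ℕ) : ℝ) := by positivity
  have hW2 : 3 * (((DD s m).card : ℝ) * ∑ a ∈ DD s m, ((a - 1 : ℕ) : ℝ)) ≤
      3 * K * (m.divisors.card : ℝ) * ((m : ℝ) ^ s) ^ 2 := by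
    have h1 : ((DD s m).card : ℝ) * (∑ a ∈ DD s m, ((a - 1 : ℕ) : ℝ)) ≤
        (m.divisors.card : ℝ) * (((DD s m).card : ℝ) * (m : ℝ) ^ s) :=
      mul_le_mul hddD hS hS0 (by linarith)
    have h2 : (m.divisors.card : ℝ) * (((DD s m).card : ℝ) * (m : ℝ) ^ s) ≤
        (m.divisors.card : ℝ) * ((K * (m : ℝ) ^ s) * (m : ℝ) ^ s) := by
      apply mul_le_mul_of_nonneg_left _ (by linarith)
      apply mul_le_mul_of_nonneg_right hcard (le_of_lt hM0)
    nlinarith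
  have hW3 : ((DD s m).card : ℝ) ^ 3 ≤ K ^ 2 * (m.divisors.card : ℝ) * ((m : ℝ) ^ s) ^ 2 := by
    have h1 : ((DD s m).card : ℝ) ^ 3 ≤ (m.divisors.card : ℝ) * ((K * (m : ℝ) ^ s) *
        (K * (m : ℝ) ^ s)) := by
      calc ((DD s m).card : ℝ) ^ 3 = ((DD s m).card : ℝ) * (((DD s m).card : ℝ) *
            ((DD s m).card : ℝ)) := by ring
        _ ≤ (m.divisors.card : ℝ) * ((K * (m : ℝ) ^ s) * (K * (m : ℝ) ^ s)) := by
            apply mul_le_mul hddD _ (by positivity) (by linarith)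
            exact mul_le_mul hcard hcard hdd0 (by positivity)
    nlinarith
  push_cast
  linarith

end NPAux

set_option maxHeartbeats 1000000 in
open NPAux in
theorem stmt14 (s δ : ℝ) (hs1 : 1 / 2 < s) (hs2 : s < 1) (hδ1 : 0 < δ) (hδ2 : δ < s)
    (c : ℝ) (hc : 0 < c) (hd : ∀ k : ℕ, 0 < k → (k.divisors.card : ℝ) ≤ c * (k : ℝ) ^ δ)
    (n m : ℕ) (hn : 3 ≤ n) (hm : n ≤ m) :
    permP0 s n m <
      (1 + 3 * c + c ^ 2) * (m.divisors.card : ℝ) * (m : ℝ) ^ (2 * s) /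
        ((n : ℝ) * ((n : ℝ) - 1) * ((n : ℝ) - 2)) ∧
    (6 ≤ n →
      permP0 s n m <
        2 * (1 + 3 * c + c ^ 2) * (m.divisors.card : ℝ) * (m : ℝ) ^ (2 * s) / (n : ℝ) ^ 3) ∧
    (6 ≤ n → c ^ ((1 : ℝ) / (s - δ)) ≤ (m : ℝ) →
      permP0 s n m < 10 * (m.divisors.card : ℝ) * (m : ℝ) ^ (2 * s) / (n : ℝ) ^ 3) := by
  classical
  have hm0 : m ≠ 0 := by omega
  have hmR : (1 : ℝ) < (m : ℝ) := by
    have : 1 < m := by omega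
    exact_mod_cast this
  have hmpos : (0 : ℝ) < (m : ℝ) := lt_trans one_pos hmR
  have hs0 : 0 < s := by linarith
  have h1M : (1 : ℝ) < (m : ℝ) ^ s := by
    have := Real.rpow_lt_rpow_of_exponent_lt hmR hs0
    rwa [Real.rpow_zero] at this
  have hM0 : (0 : ℝ) < (m : ℝ) ^ s := lt_trans one_pos h1M
  have hc1 : 1 < c := by
    have h2 := hd 2 (by norm_num)
    have hdiv : (2 : ℕ).divisors.card = 2 := by
      rw [Nat.Prime.divisors Nat.prime_two]
      rfl
    rw [hdiv] at h2
    push_cast at h2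
    have hlt : (2 : ℝ) ^ δ < 2 := by
      have := Real.rpow_lt_rpow_of_exponent_lt (by norm_num : (1 : ℝ) < 2)
        (by linarith : δ < 1)
      rwa [Real.rpow_one] at this
    by_contra hcon
    push_neg at hcon
    have hpos : (0 : ℝ) < (2 : ℝ) ^ δ := Real.rpow_pos_of_pos (by norm_num) δ
    nlinarith
  have hcount := main_count (s := s) (n := n) (m := m)
    (x0 := ⟨0, by omega⟩) (x1 := ⟨1, by omega⟩) (x2 := ⟨2, by omega⟩) hm0 h1M
    (by simp [Fin.ext_iff]) (by simp [Fin.ext_iff]) (by simp [Fin.ext_iff])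
  have hnR : (3 : ℝ) ≤ (n : ℝ) := by exact_mod_cast hn
  have hQ0 : (0 : ℝ) < (n : ℝ) * ((n : ℝ) - 1) * ((n : ℝ) - 2) :=
    mul_pos (mul_pos (by linarith) (by linarith)) (by linarith)
  have hP : permP0 s n m ≤
      ((((∑ a ∈ DD s m, (a - 1) * (a - 2)) +
        (3 * ((DD s m).card * ∑ a ∈ DD s m, (a - 1)) + (DD s m).card ^ 3)) : ℕ) : ℝ) /
        ((n : ℝ) * ((n : ℝ) - 1) * ((n : ℝ) - 2)) := by
    have hperm : permP0 s n m = ((SS s n m).card : ℝ) / (n.factorial : ℝ) := by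
      rw [permP0, SS_eq]
    rw [hperm]
    have hfac : (0 : ℝ) < (n.factorial : ℝ) := by exact_mod_cast n.factorial_pos
    have hF : (0 : ℝ) < ((n - 3).factorial : ℝ) := by exact_mod_cast (n - 3).factorial_pos
    have hle : ((SS s n m).card : ℝ) ≤
        ((((∑ a ∈ DD s m, (a - 1) * (a - 2)) +
          (3 * ((DD s m).card * ∑ a ∈ DD s m, (a - 1)) + (DD s m).card ^ 3)) : ℕ) : ℝ) *
          ((n - 3).factorial : ℝ) := by
      exact_mod_cast hcount
    calc ((SS s n m).card : ℝ) / (n.factorial : ℝ)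
        ≤ ((((∑ a ∈ DD s m, (a - 1) * (a - 2)) +
            (3 * ((DD s m).card * ∑ a ∈ DD s m, (a - 1)) + (DD s m).card ^ 3)) : ℕ) : ℝ) *
            ((n - 3).factorial : ℝ) / (n.factorial : ℝ) := by gcongr
      _ = _ := by
          rw [factorial_split hn]
          rw [mul_div_mul_right _ _ (ne_of_gt hF)]
  have hdd_le : ((DD s m).card : ℝ) ≤ c * (m : ℝ) ^ δ :=
    le_trans (by exact_mod_cast card_DD_le) (hd m (by omega))
  have hmδ : (m : ℝ) ^ δ ≤ (m : ℝ) ^ s :=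
    Real.rpow_le_rpow_of_exponent_le hmR.le hδ2.le
  have hcard1 : ((DD s m).card : ℝ) ≤ c * (m : ℝ) ^ s :=
    le_trans hdd_le (mul_le_mul_of_nonneg_left hmδ hc.le)
  have hWlt1 := Wr_lt (s := s) hm0 h1M hc1.le hcard1
  have hsq : (m : ℝ) ^ (2 * s) = ((m : ℝ) ^ s) ^ 2 := rpow_two_mul (by positivity)
  have hD1 : (1 : ℝ) ≤ (m.divisors.card : ℝ) := by
    have : 0 < m.divisors.card :=
      Finset.card_pos.mpr ⟨1, Nat.one_mem_divisors.mpr hm0⟩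
    exact_mod_cast this
  have part1 : permP0 s n m <
      (1 + 3 * c + c ^ 2) * (m.divisors.card : ℝ) * (m : ℝ) ^ (2 * s) /
        ((n : ℝ) * ((n : ℝ) - 1) * ((n : ℝ) - 2)) := by
    rw [hsq]
    calc permP0 s n m ≤ _ := hP
      _ < (1 + 3 * c + c ^ 2) * (m.divisors.card : ℝ) * ((m : ℝ) ^ s) ^ 2 /
          ((n : ℝ) * ((n : ℝ) - 1) * ((n : ℝ) - 2)) := by gcongr
  refine ⟨part1, ?_, ?_⟩
  · intro hn6
    have hn6R : (6 : ℝ) ≤ (n : ℝ) := by exact_mod_cast hn6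
    have hn3 : (0 : ℝ) < (n : ℝ) ^ 3 := by positivity
    have hB0 : (0 : ℝ) < (1 + 3 * c + c ^ 2) * (m.divisors.card : ℝ) * (m : ℝ) ^ (2 * s) := by
      have h1 : (0 : ℝ) < 1 + 3 * c + c ^ 2 := by nlinarith
      have h2 : (0 : ℝ) < (m : ℝ) ^ (2 * s) := Real.rpow_pos_of_pos hmpos _
      nlinarith
    have hQn : (n : ℝ) ^ 3 ≤ 2 * ((n : ℝ) * ((n : ℝ) - 1) * ((n : ℝ) - 2)) := by nlinarith
    calc permP0 s n m
        < (1 + 3 * c + c ^ 2) * (m.divisors.card : ℝ) * (m : ℝ) ^ (2 * s) /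
          ((n : ℝ) * ((n : ℝ) - 1) * ((n : ℝ) - 2)) := part1
      _ ≤ 2 * (1 + 3 * c + c ^ 2) * (m.divisors.card : ℝ) * (m : ℝ) ^ (2 * s) /
          (n : ℝ) ^ 3 := by
          rw [div_le_div_iff₀ hQ0 hn3]
          nlinarith
  · intro hn6 hm3
    have hn6R : (6 : ℝ) ≤ (n : ℝ) := by exact_mod_cast hn6
    have hn3 : (0 : ℝ) < (n : ℝ) ^ 3 := by positivity
    have hsd : 0 < s - δ := by linarith
    have hcm : c ≤ (m : ℝ) ^ (s - δ) := by
      have h := Real.rpow_le_rpow (by positivity) hm3 (le_of_lt hsd)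
      rw [← Real.rpow_mul hc.le, one_div, inv_mul_cancel₀ (ne_of_gt hsd),
        Real.rpow_one] at h
      exact h
    have hcard5 : ((DD s m).card : ℝ) ≤ 1 * (m : ℝ) ^ s := by
      rw [one_mul]
      calc ((DD s m).card : ℝ) ≤ c * (m : ℝ) ^ δ := hdd_le
        _ ≤ (m : ℝ) ^ (s - δ) * (m : ℝ) ^ δ := by
            apply mul_le_mul_of_nonneg_right hcm
            positivity
        _ = (m : ℝ) ^ s := by
            rw [← Real.rpow_add hmpos]
            ring_nf
    have hWlt5 := Wr_lt (s := s) hm0 h1M le_rfl hcard5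
    have h5 : (1 + 3 * (1 : ℝ) + 1 ^ 2) = 5 := by norm_num
    rw [h5] at hWlt5
    have hQn : (n : ℝ) ^ 3 ≤ 2 * ((n : ℝ) * ((n : ℝ) - 1) * ((n : ℝ) - 2)) := by nlinarith
    have hMM : (0 : ℝ) < ((m : ℝ) ^ s) ^ 2 := by positivity
    calc permP0 s n m ≤ _ := hP
      _ < 5 * (m.divisors.card : ℝ) * ((m : ℝ) ^ s) ^ 2 /
          ((n : ℝ) * ((n : ℝ) - 1) * ((n : ℝ) - 2)) := by gcongr
      _ ≤ 10 * (m.divisors.card : ℝ) * (m : ℝ) ^ (2 * s) / (n : ℝ) ^ 3 := by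
          rw [hsq, div_le_div_iff₀ hQ0 hn3]
          nlinarith
end

section
/- Let r, m, n be positive integers with rn ≤ m < (r+1)n, and let d₁, d₂ be divisors of m with d₁ ≤ d₂ ≤ m/(r+1) and n ≥ d₁ + d₂ > m(2r+3)/(2(r+1)(r+2)). Then d₁ = m/c₁ and d₂ = m/c₂ for positive integers c₁, c₂ dividing m with c₂ ≤ 2r+3, and either r+2 ≤ c₂ ≤ c₁ < 2(r+1)(r+2), or c₂ = r+1 and c₁ ≥ r(r+1). -/
theorem stmt17 (r m n d₁ d₂ : ℕ) (hr : 0 < r) (hm : 0 < m) (hn : 0 < n)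
    (h1 : r * n ≤ m) (h2 : m < (r + 1) * n)
    (hd₁ : d₁ ∣ m) (hd₂ : d₂ ∣ m) (h12 : d₁ ≤ d₂)
    (h2b : (d₂ : ℝ) ≤ (m : ℝ) / ((r : ℝ) + 1))
    (hsum1 : d₁ + d₂ ≤ n)
    (hsum2 : (m : ℝ) * (2 * (r : ℝ) + 3) / (2 * ((r : ℝ) + 1) * ((r : ℝ) + 2)) <
      (d₁ : ℝ) + (d₂ : ℝ)) :
    ∃ c₁ c₂ : ℕ, c₁ ∣ m ∧ c₂ ∣ m ∧ d₁ * c₁ = m ∧ d₂ * c₂ = m ∧ c₂ ≤ 2 * r + 3 ∧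
      ((r + 2 ≤ c₂ ∧ c₂ ≤ c₁ ∧ c₁ < 2 * (r + 1) * (r + 2)) ∨
       (c₂ = r + 1 ∧ r * (r + 1) ≤ c₁)) := by
  have hd₁pos : 0 < d₁ := Nat.pos_of_dvd_of_pos hd₁ hm
  have hd₂pos : 0 < d₂ := Nat.pos_of_dvd_of_pos hd₂ hm
  set c₁ := m / d₁ with hc₁
  set c₂ := m / d₂ with hc₂
  have e₁ : d₁ * c₁ = m := Nat.mul_div_cancel' hd₁
  have e₂ : d₂ * c₂ = m := Nat.mul_div_cancel' hd₂
  have hc₁dvd : c₁ ∣ m := ⟨d₁, by rw [← e₁]; ring⟩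
  have hc₂dvd : c₂ ∣ m := ⟨d₂, by rw [← e₂]; ring⟩
  have hrR : (0:ℝ) < (r:ℝ) := by exact_mod_cast hr
  -- real versions
  have hmR : (0:ℝ) < (m:ℝ) := by exact_mod_cast hm
  have h2b' : (d₂:ℝ) * ((r:ℝ)+1) ≤ (m:ℝ) := by
    rw [le_div_iff₀ (by positivity)] at h2b; linarith
  have hsum2' : (m:ℝ) * (2 * (r:ℝ) + 3) < ((d₁:ℝ) + d₂) * (2 * ((r:ℝ)+1) * ((r:ℝ)+2)) := by
    rw [div_lt_iff₀ (by positivity)] at hsum2; linarith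
  have h12R : (d₁:ℝ) ≤ (d₂:ℝ) := by exact_mod_cast h12
  -- c₂ ≥ r+1
  have hc₂ge : r + 1 ≤ c₂ := by
    have : d₂ * (r + 1) ≤ m := by exact_mod_cast h2b'
    have : d₂ * (r + 1) ≤ d₂ * c₂ := by omega
    exact Nat.le_of_mul_le_mul_left this hd₂pos
  -- c₂ ≤ 2r+3
  have hc₂le : c₂ ≤ 2 * r + 3 := by
    have hR : (m:ℝ) < (d₂:ℝ) * (2*(r:ℝ) + 4) := by
      by_contra hcon
      push_neg at hcon
      have hA := mul_lt_mul_of_pos_right hsum2' (show (0:ℝ) < (r:ℝ)+2 by linarith)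
      have hB := mul_le_mul_of_nonneg_right h12R
        (show (0:ℝ) ≤ 2*((r:ℝ)+1)*((r:ℝ)+2)*((r:ℝ)+2) by positivity)
      have hC := mul_le_mul_of_nonneg_right hcon
        (show (0:ℝ) ≤ 2*((r:ℝ)+1)*((r:ℝ)+2) by positivity)
      nlinarith [hA, hB, hC, mul_pos hmR (show (0:ℝ) < (r:ℝ)+2 by linarith)]
    have hN : m < d₂ * (2 * r + 4) := by exact_mod_cast hR
    have : d₂ * c₂ < d₂ * (2 * r + 4) := by omega
    have := Nat.lt_of_mul_lt_mul_left this
    omega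
  refine ⟨c₁, c₂, hc₁dvd, hc₂dvd, e₁, e₂, hc₂le, ?_⟩
  rcases eq_or_lt_of_le hc₂ge with heq | hlt
  · -- c₂ = r + 1
    right
    refine ⟨heq.symm, ?_⟩
    have he : d₂ * (r + 1) = m := by rw [← heq] at e₂; exact e₂
    have key : d₁ * (r * (r + 1)) ≤ m := by
      have h1' : r * (r + 1) * n ≤ (r + 1) * m := by
        calc r * (r + 1) * n = (r + 1) * (r * n) := by ring
        _ ≤ (r + 1) * m := Nat.mul_le_mul_left _ h1
      nlinarith [Nat.mul_le_mul_left (r * (r+1)) hsum1]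
    have : d₁ * (r * (r + 1)) ≤ d₁ * c₁ := by omega
    exact Nat.le_of_mul_le_mul_left this hd₁pos
  · -- c₂ ≥ r + 2
    left
    have hc₂c₁ : c₂ ≤ c₁ := by
      have : d₁ * c₂ ≤ d₁ * c₁ := by
        calc d₁ * c₂ ≤ d₂ * c₂ := Nat.mul_le_mul_right _ h12
        _ = d₁ * c₁ := by omega
      exact Nat.le_of_mul_le_mul_left this hd₁pos
    refine ⟨hlt, hc₂c₁, ?_⟩
    -- d₂ * (r+2) ≤ m
    have hd₂le : d₂ * (r + 2) ≤ m := by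
      have : d₂ * (r + 2) ≤ d₂ * c₂ := Nat.mul_le_mul_left _ hlt
      omega
    have hd₂leR : (d₂:ℝ) * ((r:ℝ) + 2) ≤ (m:ℝ) := by exact_mod_cast hd₂le
    have hR : (m:ℝ) < (d₁:ℝ) * (2 * ((r:ℝ)+1) * ((r:ℝ)+2)) := by nlinarith
    have hN : m < d₁ * (2 * (r + 1) * (r + 2)) := by exact_mod_cast hR
    have : d₁ * c₁ < d₁ * (2 * (r + 1) * (r + 2)) := by omega
    exact Nat.lt_of_mul_lt_mul_left this
end
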